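/- arXiv:1505.01321 — 13 statements merged into one kernel-verified Lean document; each statement's English description precedes it below -/
import Mathlib

section
/- Let X be a digraph on n vertices. The coefficient of t^{n−2} in the characteristic polynomial of the Hermitian adjacency matrix H(X) equals −e, where e is the number of edges of the underlying graph Γ(X). -/
/-!
Expanding `det (t • 1 - H)` over permutations, a matrix `H` with zero diagonal gets a
contribution to `t ^ (n - 2)` only from the transpositions `(i j)`, each contributing
`-H i j * H j i`; hence `2 c_{n-2} = -tr (H * H)`. For the Hermitian adjacency matrix,
`H u v * H v u` is `1` exactly when `uv` is an edge of the underlying graph, so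
`tr (H * H)` is the degree sum `2 e`.
-/
open Matrix Complex Polynomial

/-- Hermitian adjacency matrix of a digraph given by its arc relation `E`. -/
def hermAdj {V : Type*} (E : V → V → Prop) [DecidableRel E] : Matrix V V ℂ :=
  fun u v =>
    if E u v ∧ E v u then 1
    else if E u v then Complex.I
    else if E v u then -Complex.I
    else 0

/-- The underlying (simple) graph of a digraph given by its arc relation `E`. -/
def underlying {V : Type*} (E : V → V → Prop) : SimpleGraph V where
  Adj u v := u ≠ v ∧ (E u v ∨ E v u)
  symm := ⟨fun u v h => ⟨h.1.symm, h.2.symm⟩⟩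
  loopless := ⟨fun v h => h.1 rfl⟩

namespace Matrix

variable {n R : Type*} [Fintype n] [DecidableEq n] [CommRing R]

open Equiv Finset

lemma prod_charmatrix_apply_perm_of_diag_eq_zero {M : Matrix n n R} (hM : ∀ i, M i i = 0)
    (σ : Perm n) :
    ∏ i, charmatrix M (σ i) i =
      C (∏ i ∈ σ.support, -M (σ i) i) * X ^ (Fintype.card n - #σ.support) := by
  rw [← prod_compl_mul_prod σ.support, mul_comm, map_prod, ← card_compl, ← prod_const]
  congr 1
  · refine prod_congr rfl fun i hi => ?_
    rw [charmatrix_apply_ne M _ _ (Perm.mem_support.mp hi), map_neg]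
  · refine prod_congr rfl fun i hi => ?_
    rw [Perm.notMem_support.mp (mem_compl.mp hi), charmatrix_apply_eq, hM, map_zero, sub_zero]

lemma charpoly_coeff_card_sub_two_of_diag_eq_zero {M : Matrix n n R} (hM : ∀ i, M i i = 0)
    (hn : 2 ≤ Fintype.card n) :
    M.charpoly.coeff (Fintype.card n - 2) =
      -∑ σ : Perm n with #σ.support = 2, ∏ i ∈ σ.support, M (σ i) i := by
  rw [charpoly, det_apply', finsetSum_coeff, sum_filter, ← sum_neg_distrib]
  refine sum_congr rfl fun σ _ => ?_
  have hle : #σ.support ≤ Fintype.card n := card_le_univ _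
  rw [coeff_intCast_mul, prod_charmatrix_apply_perm_of_diag_eq_zero hM, coeff_C_mul_X_pow]
  by_cases hσ : #σ.support = 2
  · rw [if_pos (by omega), if_pos hσ, (Perm.card_support_eq_two.mp hσ).sign_eq, prod_neg, hσ]
    simp
  · rw [if_neg (by omega), if_neg hσ, mul_zero, neg_zero]

lemma sum_offDiag_swap {M : Type*} [AddCommMonoid M] (f : Perm n → M) :
    ∑ p ∈ univ.offDiag, f (Equiv.swap p.1 p.2) =
      2 • ∑ σ : Perm n with #σ.support = 2, f σ := by
  rw [← sum_fiberwise_of_maps_to (g := fun p : n × n => Equiv.swap p.1 p.2)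
    (t := {σ : Perm n | #σ.support = 2}) fun p hp => by
      simpa using Perm.card_support_swap (mem_offDiag.mp hp).2.2,
    smul_sum]
  refine sum_congr rfl fun σ hσ => ?_
  obtain ⟨a, b, hab, rfl⟩ := Perm.card_support_eq_two.mp (mem_filter.mp hσ).2
  have hfiber : {p ∈ (univ : Finset n).offDiag | Equiv.swap p.1 p.2 = Equiv.swap a b} =
      {(a, b), (b, a)} := by
    ext ⟨c, d⟩
    simp only [mem_filter, mem_offDiag, mem_univ, true_and, mem_insert, mem_singleton,
      Prod.mk.injEq]
    constructor
    · rintro ⟨hcd, hsw⟩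
      have hsupp : ({c, d} : Finset n) = {a, b} := by
        rw [← Perm.support_swap hcd, ← Perm.support_swap hab, hsw]
      rw [← coe_inj, coe_pair, coe_pair, Set.pair_eq_pair_iff] at hsupp
      tauto
    · rintro (⟨rfl, rfl⟩ | ⟨rfl, rfl⟩)
      · exact ⟨hab, rfl⟩
      · exact ⟨hab.symm, Equiv.swap_comm _ _⟩
  rw [hfiber, sum_pair (by simp [hab]), Equiv.swap_comm b a, two_smul]

theorem two_mul_charpoly_coeff_card_sub_two_of_diag_eq_zero {M : Matrix n n R}
    (hM : ∀ i, M i i = 0) (hn : 2 ≤ Fintype.card n) :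
    2 * M.charpoly.coeff (Fintype.card n - 2) = -(M * M).trace := by
  have htrace : (M * M).trace = ∑ p ∈ univ.offDiag, M p.1 p.2 * M p.2 p.1 := by
    rw [sum_subset (subset_univ _) fun p _ hp => by
      simp [mem_offDiag] at hp; simp [hp, hM], Fintype.sum_prod_type]
    rfl
  have hswap (p : n × n) (hp : p ∈ univ.offDiag) :
      M p.1 p.2 * M p.2 p.1 =
        ∏ i ∈ (Equiv.swap p.1 p.2).support, M (Equiv.swap p.1 p.2 i) i := by
    have hne := (mem_offDiag.mp hp).2.2
    rw [Perm.support_swap hne, prod_pair hne, swap_apply_left, swap_apply_right, mul_comm]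
  rw [charpoly_coeff_card_sub_two_of_diag_eq_zero hM hn, htrace, sum_congr rfl hswap,
    sum_offDiag_swap fun σ => ∏ i ∈ σ.support, M (σ i) i, nsmul_eq_mul, Nat.cast_ofNat, mul_neg]

end Matrix

section Digraph

variable {V : Type*} {E : V → V → Prop} [DecidableRel E]

lemma hermAdj_apply_self (hirr : ∀ v, ¬ E v v) (v : V) : hermAdj E v v = 0 := by
  simp [hermAdj, hirr v]

lemma hermAdj_apply_mul_hermAdj_apply (u v : V) :
    hermAdj E u v * hermAdj E v u = if E u v ∨ E v u then 1 else 0 := by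
  unfold hermAdj
  by_cases huv : E u v <;> by_cases hvu : E v u <;> simp [huv, hvu]

variable [Fintype V] [DecidableRel (underlying E).Adj]

lemma hermAdj_mul_self_apply_self (hirr : ∀ v, ¬ E v v) (v : V) :
    (hermAdj E * hermAdj E) v v = (underlying E).degree v := by
  rw [mul_apply, ← SimpleGraph.card_neighborFinset_eq_degree,
    SimpleGraph.neighborFinset_eq_filter, Finset.natCast_card_filter]
  refine Finset.sum_congr rfl fun u _ => ?_
  by_cases hvu : v = u
  · subst hvu
    simp [hermAdj_apply_self hirr]
  · simp [hermAdj_apply_mul_hermAdj_apply, underlying, hvu]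

lemma trace_hermAdj_mul_self (hirr : ∀ v, ¬ E v v) :
    (hermAdj E * hermAdj E).trace = 2 * (underlying E).edgeFinset.card := by
  simp only [trace, diag_apply, hermAdj_mul_self_apply_self hirr]
  exact_mod_cast (underlying E).sum_degrees_eq_twice_card_edges

end Digraph

open scoped Classical in
theorem stmt1 {n : ℕ} (hn : 2 ≤ n) (E : Fin n → Fin n → Prop) [DecidableRel E]
    (hirr : ∀ v, ¬ E v v) :
    (hermAdj E).charpoly.coeff (n - 2) = -((underlying E).edgeFinset.card : ℂ) := by
  have h := two_mul_charpoly_coeff_card_sub_two_of_diag_eq_zero (hermAdj_apply_self hirr)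
    (by rwa [Fintype.card_fin])
  rw [Fintype.card_fin, trace_hermAdj_mul_self hirr] at h
  linear_combination h / 2
end

section
/- Let X be a digraph on n vertices and suppose X contains a set U of m vertices such that no two vertices of U form a digon (single arcs between vertices of U are allowed). Then the number η⁺(X) of nonnegative eigenvalues of H(X), counted with multiplicity, satisfies η⁺(X) ≥ ⌈m/2⌉, and likewise the number η⁻(X) of nonpositive eigenvalues satisfies η⁻(X) ≥ ⌈m/2⌉. -/
/-! Real vectors supported on a digon-free set `U` form a real space `W` of dimension `|U|` on which
the form `x ↦ x* H x` vanishes, because `H` is skew-symmetric on `U × U`. If `x ≠ 0` has vanishing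
coordinates, in an eigenbasis of `H`, at all `p` nonnegative eigenvalues, then `x* H x < 0`. Hence
reading off those `p` coordinates is injective on `W`, and `|U| ≤ 2p` because `ℂ^p` has real
dimension `2p`. The same argument applies to the nonpositive eigenvalues. -/

open Matrix Complex

theorem Matrix.finrank_le_two_mul_card_of_forall_mulVec_eq_zero {𝕜 m n : Type*} [RCLike 𝕜]
    [Fintype m] (M : Matrix n m 𝕜) (W : Submodule ℝ (m → 𝕜)) (P : Finset n)
    (h : ∀ x ∈ W, (∀ i ∈ P, (M *ᵥ x) i = 0) → x = 0) :
    Module.finrank ℝ W ≤ 2 * P.card := by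
  let f : W →ₗ[ℝ] (P → 𝕜) :=
    LinearMap.funLeft ℝ 𝕜 Subtype.val ∘ₗ (M.mulVecLin.restrictScalars ℝ) ∘ₗ W.subtype
  have hf : Function.Injective f := by
    refine (injective_iff_map_eq_zero f).2 fun x hx => Subtype.ext (h x x.2 fun i hi => ?_)
    exact congrFun hx ⟨i, hi⟩
  calc Module.finrank ℝ W ≤ Module.finrank ℝ (P → 𝕜) :=
        LinearMap.finrank_le_finrank_of_injective hf
    _ = P.card * Module.finrank ℝ 𝕜 := by simp [Module.finrank_pi_fintype]
    _ ≤ 2 * P.card := by nlinarith [RCLike.finrank_le_two (K := 𝕜)]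

theorem Matrix.dotProduct_mulVec_self_eq_zero_of_skew {R n : Type*} [CommRing R]
    [NoZeroDivisors R] [CharZero R] [Fintype n] (A : Matrix n n R) (x : n → R)
    (h : ∀ u v, x u ≠ 0 → x v ≠ 0 → A v u = -A u v) : x ⬝ᵥ (A *ᵥ x) = 0 := by
  set S := x ⬝ᵥ (A *ᵥ x)
  have hS : S = ∑ u, ∑ v, x u * A u v * x v := by
    simp only [S, dotProduct, mulVec, Finset.mul_sum, mul_assoc]
  refine CharZero.eq_neg_self_iff.1 ?_
  calc S = ∑ u, ∑ v, -(x v * A v u * x u) := by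
        rw [hS]
        refine Finset.sum_congr rfl fun u _ => Finset.sum_congr rfl fun v _ => ?_
        by_cases hu : x u = 0
        · simp [hu]
        by_cases hv : x v = 0
        · simp [hv]
        rw [h u v hu hv]
        ring
    _ = -S := by rw [Finset.sum_comm, hS]; simp only [Finset.sum_neg_distrib]

namespace Matrix.IsHermitian

variable {𝕜 n : Type*} [RCLike 𝕜] [Fintype n] [DecidableEq n] {A : Matrix n n 𝕜}

theorem re_star_dotProduct_mulVec (hA : A.IsHermitian) (x : n → 𝕜) :
    RCLike.re (star x ⬝ᵥ (A *ᵥ x)) =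
      ∑ i, hA.eigenvalues i * ‖(star (hA.eigenvectorUnitary : Matrix n n 𝕜) *ᵥ x) i‖ ^ 2 := by
  conv_lhs => rw [hA.spectral_theorem, Unitary.conjStarAlgAut_apply]
  set U : Matrix n n 𝕜 := (hA.eigenvectorUnitary : Matrix n n 𝕜)
  have hstar : star x ᵥ* U = star (star U *ᵥ x) := by
    rw [star_mulVec, star_eq_conjTranspose, conjTranspose_conjTranspose]
  rw [← mulVec_mulVec, ← mulVec_mulVec, dotProduct_mulVec, hstar]
  simp only [dotProduct, mulVec_diagonal, Pi.star_apply, Function.comp_apply, map_sum]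
  refine Finset.sum_congr rfl fun i _ => ?_
  rw [RCLike.star_def, mul_left_comm, RCLike.conj_mul, ← RCLike.ofReal_pow, ← RCLike.ofReal_mul,
    RCLike.ofReal_re]

theorem eq_zero_of_star_eigenvectorUnitary_mulVec_eq_zero (hA : A.IsHermitian) {x : n → 𝕜}
    (hx : star (hA.eigenvectorUnitary : Matrix n n 𝕜) *ᵥ x = 0) : x = 0 := by
  rw [← one_mulVec x, ← Unitary.coe_mul_star_self hA.eigenvectorUnitary, Unitary.coe_star,
    ← mulVec_mulVec, hx, mulVec_zero]

theorem eq_zero_of_isotropic_of_forall_nonneg (hA : A.IsHermitian) {x : n → 𝕜}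
    (hx : star x ⬝ᵥ (A *ᵥ x) = 0)
    (hy : ∀ i, 0 ≤ hA.eigenvalues i → (star (hA.eigenvectorUnitary : Matrix n n 𝕜) *ᵥ x) i = 0) :
    x = 0 := by
  set y := star (hA.eigenvectorUnitary : Matrix n n 𝕜) *ᵥ x
  have hterm : ∀ i ∈ Finset.univ, hA.eigenvalues i * ‖y i‖ ^ 2 ≤ 0 := fun i _ => by
    by_cases hi : 0 ≤ hA.eigenvalues i
    · simp [hy i hi]
    · exact mul_nonpos_of_nonpos_of_nonneg (not_le.1 hi).le (sq_nonneg _)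
  have hsum : ∑ i, hA.eigenvalues i * ‖y i‖ ^ 2 = 0 := by
    rw [← hA.re_star_dotProduct_mulVec, hx, map_zero]
  refine hA.eq_zero_of_star_eigenvectorUnitary_mulVec_eq_zero (funext fun i => ?_)
  by_cases hi : 0 ≤ hA.eigenvalues i
  · exact hy i hi
  · simpa [(not_le.1 hi).ne] using (Finset.sum_eq_zero_iff_of_nonpos hterm).1 hsum i (by simp)

theorem eq_zero_of_isotropic_of_forall_nonpos (hA : A.IsHermitian) {x : n → 𝕜}
    (hx : star x ⬝ᵥ (A *ᵥ x) = 0)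
    (hy : ∀ i, hA.eigenvalues i ≤ 0 → (star (hA.eigenvectorUnitary : Matrix n n 𝕜) *ᵥ x) i = 0) :
    x = 0 := by
  set y := star (hA.eigenvectorUnitary : Matrix n n 𝕜) *ᵥ x
  have hterm : ∀ i ∈ Finset.univ, 0 ≤ hA.eigenvalues i * ‖y i‖ ^ 2 := fun i _ => by
    by_cases hi : hA.eigenvalues i ≤ 0
    · simp [hy i hi]
    · exact mul_nonneg (not_le.1 hi).le (sq_nonneg _)
  have hsum : ∑ i, hA.eigenvalues i * ‖y i‖ ^ 2 = 0 := by
    rw [← hA.re_star_dotProduct_mulVec, hx, map_zero]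
  refine hA.eq_zero_of_star_eigenvectorUnitary_mulVec_eq_zero (funext fun i => ?_)
  by_cases hi : hA.eigenvalues i ≤ 0
  · exact hy i hi
  · simpa [(not_le.1 hi).ne'] using (Finset.sum_eq_zero_iff_of_nonneg hterm).1 hsum i (by simp)

theorem finrank_le_two_mul_card_nonneg_of_isotropic (hA : A.IsHermitian)
    (W : Submodule ℝ (n → 𝕜)) (hW : ∀ x ∈ W, star x ⬝ᵥ (A *ᵥ x) = 0) :
    Module.finrank ℝ W ≤ 2 * (Finset.univ.filter (fun i => 0 ≤ hA.eigenvalues i)).card :=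
  finrank_le_two_mul_card_of_forall_mulVec_eq_zero _ W _ fun x hx hy =>
    hA.eq_zero_of_isotropic_of_forall_nonneg (hW x hx) fun i hi => hy i (by simpa using hi)

theorem finrank_le_two_mul_card_nonpos_of_isotropic (hA : A.IsHermitian)
    (W : Submodule ℝ (n → 𝕜)) (hW : ∀ x ∈ W, star x ⬝ᵥ (A *ᵥ x) = 0) :
    Module.finrank ℝ W ≤ 2 * (Finset.univ.filter (fun i => hA.eigenvalues i ≤ 0)).card :=
  finrank_le_two_mul_card_of_forall_mulVec_eq_zero _ W _ fun x hx hy =>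
    hA.eq_zero_of_isotropic_of_forall_nonpos (hW x hx) fun i hi => hy i (by simpa using hi)

end Matrix.IsHermitian

theorem hermAdj_swap_of_not_digon {V : Type*} {E : V → V → Prop} [DecidableRel E] {u v : V}
    (h : ¬(E u v ∧ E v u)) : hermAdj E v u = -hermAdj E u v := by
  by_cases huv : E u v <;> by_cases hvu : E v u <;> simp_all [hermAdj]

def extendRealByZero {V : Type*} [DecidableEq V] (U : Finset V) : (U → ℝ) →ₗ[ℝ] (V → ℂ) where
  toFun r v := if h : v ∈ U then (r ⟨v, h⟩ : ℂ) else 0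
  map_add' r s := by ext v; by_cases hv : v ∈ U <;> simp [hv]
  map_smul' c r := by ext v; by_cases hv : v ∈ U <;> simp [hv]

section extendRealByZero

variable {V : Type*} [DecidableEq V] (U : Finset V)

theorem extendRealByZero_injective : Function.Injective (extendRealByZero U) := by
  intro r s hrs
  funext u
  simpa [extendRealByZero] using congrFun hrs u

theorem star_extendRealByZero (r : U → ℝ) :
    star (extendRealByZero U r) = extendRealByZero U r := by
  ext v
  by_cases hv : v ∈ U <;> simp [extendRealByZero, hv]

theorem mem_of_extendRealByZero_ne_zero {r : U → ℝ} {v : V} (h : extendRealByZero U r v ≠ 0) :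
    v ∈ U := by
  by_contra hv
  simp [extendRealByZero, hv] at h

end extendRealByZero

theorem isotropic_hermAdj_of_no_digon {V : Type*} [Fintype V] [DecidableEq V]
    (E : V → V → Prop) [DecidableRel E]
    (U : Finset V) (hU : ∀ x ∈ U, ∀ y ∈ U, ¬ (E x y ∧ E y x)) :
    ∀ x ∈ LinearMap.range (extendRealByZero U), star x ⬝ᵥ (hermAdj E *ᵥ x) = 0 := by
  rintro _ ⟨r, rfl⟩
  rw [star_extendRealByZero]
  refine dotProduct_mulVec_self_eq_zero_of_skew _ _ fun u v hu hv => hermAdj_swap_of_not_digon ?_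
  exact hU u (mem_of_extendRealByZero_ne_zero U hu) v (mem_of_extendRealByZero_ne_zero U hv)

theorem stmt2_general {V : Type*} [Fintype V] [DecidableEq V]
    (E : V → V → Prop) [DecidableRel E]
    (hH : (hermAdj E).IsHermitian)
    (U : Finset V) (hU : ∀ x ∈ U, ∀ y ∈ U, ¬ (E x y ∧ E y x)) :
    (U.card + 1) / 2 ≤ (Finset.univ.filter (fun i => 0 ≤ hH.eigenvalues i)).card ∧
    (U.card + 1) / 2 ≤ (Finset.univ.filter (fun i => hH.eigenvalues i ≤ 0)).card := by
  have hW := isotropic_hermAdj_of_no_digon E U hU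
  have hdim : Module.finrank ℝ (LinearMap.range (extendRealByZero U)) = U.card := by
    rw [LinearMap.finrank_range_of_inj (extendRealByZero_injective U),
      Module.finrank_fintype_fun_eq_card, Fintype.card_coe]
  have hnonneg := hH.finrank_le_two_mul_card_nonneg_of_isotropic _ hW
  have hnonpos := hH.finrank_le_two_mul_card_nonpos_of_isotropic _ hW
  rw [hdim] at hnonneg hnonpos
  omega

/-- If a digraph contains a set `U` of `m` vertices no two of which form a digon,
then it has at least `⌈m/2⌉` nonnegative and at least `⌈m/2⌉` nonpositive
`H`-eigenvalues (counted with multiplicity). -/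
theorem stmt2 {V : Type*} [Fintype V] [DecidableEq V]
    (E : V → V → Prop) [DecidableRel E] (hirr : ∀ v, ¬ E v v)
    (hH : (hermAdj E).IsHermitian)
    (U : Finset V) (hU : ∀ x ∈ U, ∀ y ∈ U, ¬ (E x y ∧ E y x)) :
    (U.card + 1) / 2 ≤ (Finset.univ.filter (fun i => 0 ≤ hH.eigenvalues i)).card ∧
    (U.card + 1) / 2 ≤ (Finset.univ.filter (fun i => hH.eigenvalues i ≤ 0)).card :=
  stmt2_general E hH U hU
end

section
/- Let X be a digraph and suppose X has an independent set of size α, i.e. a set of α vertices that are pairwise nonadjacent in the underlying graph Γ(X). Then the number η⁺(X) of nonnegative eigenvalues of H(X), counted with multiplicity, satisfies η⁺(X) ≥ α, and the number η⁻(X) of nonpositive eigenvalues satisfies η⁻(X) ≥ α. -/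
open Matrix Complex

/-- Linear embedding of functions on a finset `U` into functions on `V`, extending by zero. -/
def embAux {V : Type*} [DecidableEq V] (U : Finset V) : (↥U → ℂ) →ₗ[ℂ] (V → ℂ) where
  toFun c := fun x => if h : x ∈ U then c ⟨x, h⟩ else 0
  map_add' a b := by funext x; by_cases h : x ∈ U <;> simp [h]
  map_smul' m a := by funext x; by_cases h : x ∈ U <;> simp [h]

lemma auxCount {V : Type*} [Fintype V] [DecidableEq V] (A : Matrix V V ℂ)
    (hA : A.IsHermitian) (U : Finset V) (hzero : ∀ x ∈ U, ∀ y ∈ U, A x y = 0)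
    (s : Finset V) (ε : ℝ) (hs : ∀ i, i ∉ s → 0 < ε * hA.eigenvalues i) :
    U.card ≤ s.card := by
  by_contra hlt
  push_neg at hlt
  set Um : Matrix V V ℂ := (hA.eigenvectorUnitary : Matrix V V ℂ) with hUm
  -- the linear map from functions on U to coordinates in s
  let L : (↥U → ℂ) →ₗ[ℂ] (↥s → ℂ) :=
    (LinearMap.funLeft ℂ ℂ (Subtype.val : ↥s → V)).comp
      ((Matrix.mulVecLin (star Um)).comp (embAux U))
  have hninj : ¬ Function.Injective L := by
    intro hinj
    have h1 := LinearMap.finrank_le_finrank_of_injective hinj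
    simp only [Module.finrank_pi, Fintype.card_coe] at h1
    omega
  rw [← LinearMap.ker_eq_bot] at hninj
  obtain ⟨c, hcmem, hcne⟩ := Submodule.ne_bot_iff _ |>.mp hninj
  set v : V → ℂ := embAux U c with hv
  set w : V → ℂ := (star Um) *ᵥ v with hw
  have hws : ∀ i ∈ s, w i = 0 := by
    intro i hi
    have := congrFun (LinearMap.mem_ker.mp hcmem) ⟨i, hi⟩
    simpa [L, LinearMap.funLeft, w, v] using this
  have hvsupp : ∀ x, x ∉ U → v x = 0 := by
    intro x hx; simp [v, embAux, hx]
  have hvne : v ≠ 0 := by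
    intro h0
    apply hcne
    funext x
    have := congrFun h0 (x : V)
    simpa [v, embAux, x.2] using this
  have hwne : w ≠ 0 := by
    intro h0
    apply hvne
    have : Um *ᵥ w = v := by
      rw [hw, mulVec_mulVec, (Matrix.mem_unitaryGroup_iff).mp hA.eigenvectorUnitary.2,
        one_mulVec]
    rw [← this, h0, mulVec_zero]
  -- the quadratic form
  have hq0 : star v ⬝ᵥ (A *ᵥ v) = 0 := by
    simp only [dotProduct, mulVec]
    apply Finset.sum_eq_zero
    intro x _
    by_cases hx : x ∈ U
    · have : (fun j => A x j * v j) = fun _ => 0 := by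
        funext y
        by_cases hy : y ∈ U
        · rw [hzero x hx y hy, zero_mul]
        · rw [hvsupp y hy, mul_zero]
      simp [dotProduct, this]
    · simp [hvsupp x hx]
  have hA' : A = Um * diagonal (RCLike.ofReal ∘ hA.eigenvalues) * star Um :=
    hA.spectral_theorem
  have hkey : star v ⬝ᵥ (A *ᵥ v)
      = star v ⬝ᵥ ((Um * diagonal (RCLike.ofReal ∘ hA.eigenvalues) * star Um) *ᵥ v) := by
    rw [← hA']
  have hqw : star v ⬝ᵥ ((Um * diagonal (RCLike.ofReal ∘ hA.eigenvalues) * star Um) *ᵥ v)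
      = ∑ i, ((hA.eigenvalues i : ℂ) * Complex.normSq (w i)) := by
    rw [← mulVec_mulVec, ← hw, Matrix.dotProduct_mulVec, ← vecMul_vecMul]
    have hsw : star v ᵥ* Um = star w := by
      rw [hw, star_mulVec, Matrix.star_eq_conjTranspose, conjTranspose_conjTranspose]
    rw [hsw]
    simp only [dotProduct, vecMul_diagonal, Pi.star_apply, Function.comp_apply,
      RCLike.ofReal_alg, Complex.real_smul, mul_one]
    refine Finset.sum_congr rfl fun i _ => ?_
    have hconj : (star (w i)) * w i = (Complex.normSq (w i) : ℂ) := by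
      rw [Complex.star_def, mul_comm, Complex.mul_conj]
    calc star (w i) * ((hA.eigenvalues i : ℂ)) * w i
        = (hA.eigenvalues i : ℂ) * (star (w i) * w i) := by ring
      _ = (hA.eigenvalues i : ℂ) * Complex.normSq (w i) := by rw [hconj]
  -- derive the real equation
  have hreal : ∑ i, hA.eigenvalues i * Complex.normSq (w i) = 0 := by
    have := (hq0.symm.trans hkey).trans hqw
    rw [← Complex.ofReal_eq_zero]
    push_cast
    exact this.symm
  obtain ⟨i₀, hi₀⟩ : ∃ i, w i ≠ 0 := Function.ne_iff.mp hwne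
  have hi₀s : i₀ ∉ s := fun h => hi₀ (hws i₀ h)
  have hpos : 0 < ∑ i, ε * (hA.eigenvalues i * Complex.normSq (w i)) := by
    apply Finset.sum_pos'
    · intro i _
      by_cases h : i ∈ s
      · simp [hws i h]
      · rw [← mul_assoc]
        exact mul_nonneg (hs i h).le (Complex.normSq_nonneg _)
    · refine ⟨i₀, Finset.mem_univ i₀, ?_⟩
      rw [← mul_assoc]
      exact mul_pos (hs i₀ hi₀s) (Complex.normSq_pos.mpr hi₀)
  rw [← Finset.mul_sum, hreal, mul_zero] at hpos
  exact lt_irrefl 0 hpos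

/-- If a digraph has an independent set of size `α` (a set of vertices pairwise
nonadjacent in the underlying graph), then it has at least `α` nonnegative and at
least `α` nonpositive `H`-eigenvalues (counted with multiplicity). -/
theorem stmt3 {V : Type*} [Fintype V] [DecidableEq V]
    (E : V → V → Prop) [DecidableRel E] (hirr : ∀ v, ¬ E v v)
    (hH : (hermAdj E).IsHermitian)
    (U : Finset V) (hU : ∀ x ∈ U, ∀ y ∈ U, x ≠ y → ¬ (E x y ∨ E y x)) :
    U.card ≤ (Finset.univ.filter (fun i => 0 ≤ hH.eigenvalues i)).card ∧
    U.card ≤ (Finset.univ.filter (fun i => hH.eigenvalues i ≤ 0)).card := by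
  have hzero : ∀ x ∈ U, ∀ y ∈ U, hermAdj E x y = 0 := by
    intro x hx y hy
    by_cases hxy : x = y
    · subst hxy
      simp [hermAdj, hirr x]
    · have h := hU x hx y hy hxy
      push_neg at h
      simp [hermAdj, h.1, h.2]
  constructor
  · apply auxCount (hermAdj E) hH U hzero _ (-1)
    intro i hi
    simp only [Finset.mem_filter, Finset.mem_univ, true_and, not_le] at hi
    nlinarith
  · apply auxCount (hermAdj E) hH U hzero _ 1
    intro i hi
    simp only [Finset.mem_filter, Finset.mem_univ, true_and, not_le] at hi
    nlinarith
end

section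
/- For every digraph X, the largest eigenvalue λ₁(X) of H(X) and the spectral radius ρ(X) satisfy λ₁(X) ≤ ρ(X) ≤ 3·λ₁(X). -/
open Matrix Complex

/-! Write `A` for the entrywise real part of `H`; it is nonnegative, and real vectors see only `A`
since the imaginary part of `H` is antisymmetric. For a unit eigenvector `x = a + i b` of `H` with
eigenvalue `λ = x* H x`, `λ + x̄* H x̄ = 2 (aᵀ A a + bᵀ A b)`.
Nonnegativity of `A` gives `|aᵀ A a| ≤ |a|ᵀ A |a| = |a|* H |a| ≤ λ₁ ‖a‖²`, likewise for `b`, and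
`x̄* H x̄ ≤ λ₁`; hence `λ ≥ -2 λ₁ - λ₁ = -3 λ₁`. Together with `λ ≤ λ₁` this also forces `λ₁ ≥ 0`. -/

lemma re_hermAdj_nonneg {V : Type*} (E : V → V → Prop) [DecidableRel E] (u v : V) :
    0 ≤ (hermAdj E u v).re := by
  unfold hermAdj
  split_ifs <;> simp

section

open scoped MatrixOrder ComplexOrder

variable {V : Type*} [Fintype V]

def quadForm (H : Matrix V V ℂ) (w : V → ℂ) : ℝ := (star w ⬝ᵥ H *ᵥ w).re

lemma quadForm_ofReal (H : Matrix V V ℂ) (v : V → ℝ) :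
    quadForm H (ofReal ∘ v) = v ⬝ᵥ H.map re *ᵥ v := by
  simp only [quadForm, dotProduct, mulVec, Finset.mul_sum, re_sum]
  refine Finset.sum_congr rfl fun u _ => Finset.sum_congr rfl fun t _ => ?_
  simp [mul_re]

lemma quadForm_add_quadForm_star (H : Matrix V V ℂ) (x : V → ℂ) :
    quadForm H x + quadForm H (star x) =
      2 * ((re ∘ x) ⬝ᵥ H.map re *ᵥ (re ∘ x) + (im ∘ x) ⬝ᵥ H.map re *ᵥ (im ∘ x)) := by
  simp only [quadForm, dotProduct, mulVec, Finset.mul_sum, re_sum, ← Finset.sum_add_distrib]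
  refine Finset.sum_congr rfl fun u _ => Finset.sum_congr rfl fun t _ => ?_
  simp [mul_re, mul_im]
  ring

lemma Matrix.abs_dotProduct_mulVec_le {M : Matrix V V ℝ} (hM : ∀ i j, 0 ≤ M i j) (u v : V → ℝ) :
    |u ⬝ᵥ M *ᵥ v| ≤ |u| ⬝ᵥ M *ᵥ |v| := by
  simp only [dotProduct, mulVec, Finset.mul_sum]
  refine (Finset.abs_sum_le_sum_abs _ _).trans (Finset.sum_le_sum fun i _ => ?_)
  refine (Finset.abs_sum_le_sum_abs _ _).trans (Finset.sum_le_sum fun j _ => ?_)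
  simp [abs_mul, abs_of_nonneg (hM i j)]

namespace Matrix.IsHermitian

variable [DecidableEq V] {H : Matrix V V ℂ} (hH : H.IsHermitian) {c : ℝ}
  (hc : ∀ i, hH.eigenvalues i ≤ c)
include hc

lemma quadForm_le (w : V → ℂ) : quadForm H w ≤ c * (star w ⬝ᵥ w).re := by
  have hle : H ≤ algebraMap ℝ (Matrix V V ℂ) c := by
    refine le_algebraMap_of_spectrum_le (fun x hx => ?_) hH.isSelfAdjoint
    obtain ⟨i, rfl⟩ := hH.spectrum_real_eq_range_eigenvalues ▸ hx
    exact hc i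
  have := (Complex.le_def.mp ((Matrix.le_iff.mp hle).dotProduct_mulVec_nonneg w)).1
  simpa [quadForm, Algebra.algebraMap_eq_smul_one, sub_mulVec, smul_mulVec, dotProduct_sub,
    dotProduct_smul] using this

variable (hre : ∀ i j, 0 ≤ (H i j).re)
include hre

lemma neg_mul_le_dotProduct_map_re_mulVec (v : V → ℝ) :
    -(c * (v ⬝ᵥ v)) ≤ v ⬝ᵥ H.map re *ᵥ v := by
  have hbound : |v| ⬝ᵥ H.map re *ᵥ |v| ≤ c * (v ⬝ᵥ v) := by
    have := hH.quadForm_le hc (ofReal ∘ |v|)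
    rw [quadForm_ofReal] at this
    have hnorm : (star (ofReal ∘ |v|) ⬝ᵥ ofReal ∘ |v|).re = v ⬝ᵥ v := by
      simp [dotProduct, abs_mul_abs_self]
    rwa [hnorm] at this
  exact neg_le_of_abs_le ((abs_dotProduct_mulVec_le hre v v).trans hbound)

lemma neg_three_mul_le_eigenvalues (j : V) : -(3 * c) ≤ hH.eigenvalues j := by
  set x : V → ℂ := ⇑(hH.eigenvectorBasis j)
  have hx_norm : (star x ⬝ᵥ x).re = 1 := by
    rw [dotProduct_comm, ← EuclideanSpace.inner_eq_star_dotProduct, ← RCLike.re_eq_complex_re,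
      inner_self_eq_norm_sq, hH.eigenvectorBasis.orthonormal.1 j, one_pow]
  have hev : hH.eigenvalues j = quadForm H x := hH.eigenvalues_eq j
  have hx_re_im : (re ∘ x) ⬝ᵥ (re ∘ x) + (im ∘ x) ⬝ᵥ (im ∘ x) = 1 := by
    rw [← hx_norm]
    simp [dotProduct, ← Finset.sum_add_distrib, mul_re]
  have h_star : quadForm H (star x) ≤ c := by
    have := hH.quadForm_le hc (star x)
    rwa [star_star, dotProduct_comm, hx_norm, mul_one] at this
  have h_re := hH.neg_mul_le_dotProduct_map_re_mulVec hc hre (re ∘ x)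
  have h_im := hH.neg_mul_le_dotProduct_map_re_mulVec hc hre (im ∘ x)
  have hc_split : c * ((re ∘ x) ⬝ᵥ (re ∘ x)) + c * ((im ∘ x) ⬝ᵥ (im ∘ x)) = c := by
    rw [← mul_add, hx_re_im, mul_one]
  linarith [quadForm_add_quadForm_star H x]

lemma abs_eigenvalues_le_three_mul (j : V) : |hH.eigenvalues j| ≤ 3 * c := by
  have h_low := hH.neg_three_mul_le_eigenvalues hc hre
  exact abs_le.mpr ⟨h_low j, by linarith [hc j, h_low j]⟩

end Matrix.IsHermitian

end

theorem stmt7_general {V : Type*} [Fintype V] [DecidableEq V] [Nonempty V]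
    (E : V → V → Prop) [DecidableRel E]
    (hH : (hermAdj E).IsHermitian) :
    Finset.univ.sup' Finset.univ_nonempty hH.eigenvalues ≤
      Finset.univ.sup' Finset.univ_nonempty (fun i => |hH.eigenvalues i|) ∧
    Finset.univ.sup' Finset.univ_nonempty (fun i => |hH.eigenvalues i|) ≤
      3 * Finset.univ.sup' Finset.univ_nonempty hH.eigenvalues := by
  have hmax : ∀ i, hH.eigenvalues i ≤ Finset.univ.sup' Finset.univ_nonempty hH.eigenvalues :=
    fun i => Finset.le_sup' _ (Finset.mem_univ i)
  exact ⟨Finset.sup'_mono_fun fun i _ => le_abs_self _,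
    Finset.sup'_le _ _ fun i _ => hH.abs_eigenvalues_le_three_mul hmax (re_hermAdj_nonneg E) i⟩

/-- For every digraph `X`, the largest eigenvalue `λ₁(X)` of `H(X)` and the spectral
radius `ρ(X) = max |λ|` satisfy `λ₁(X) ≤ ρ(X) ≤ 3 λ₁(X)`. -/
theorem stmt7 {V : Type*} [Fintype V] [DecidableEq V] [Nonempty V]
    (E : V → V → Prop) [DecidableRel E] (hirr : ∀ v, ¬ E v v)
    (hH : (hermAdj E).IsHermitian) :
    Finset.univ.sup' Finset.univ_nonempty hH.eigenvalues ≤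
      Finset.univ.sup' Finset.univ_nonempty (fun i => |hH.eigenvalues i|) ∧
    Finset.univ.sup' Finset.univ_nonempty (fun i => |hH.eigenvalues i|) ≤
      3 * Finset.univ.sup' Finset.univ_nonempty hH.eigenvalues :=
  stmt7_general E hH
end

section
/- For every digraph X, the spectral radius of its Hermitian adjacency matrix is at most the spectral radius of the (0,1)-adjacency matrix of its underlying graph: ρ(X) ≤ ρ(A(Γ(X))). -/
/-!
Take a unit eigenvector `x` of `H(X)` for an eigenvalue of largest modulus, so that
`ρ(X) = |x* H x|`. Since `|H u v| = A u v` entrywise, the triangle inequality gives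
`|x* H x| ≤ |x|ᵀ A |x|`, and the Rayleigh bound `yᵀ A y ≤ ρ(A) ‖y‖²` for the unit vector
`y = |x|` finishes the proof.
-/

open Matrix Complex

/-- The (real, symmetric) 0-1 adjacency matrix of the underlying graph of a digraph. -/
def adjUnderlying {V : Type*} (E : V → V → Prop) [DecidableRel E] : Matrix V V ℝ :=
  fun u v => if E u v ∨ E v u then 1 else 0

namespace Matrix

theorem norm_star_dotProduct_mulVec_le_of_norm_le {R n : Type*} [NormedRing R] [StarRing R]
    [NormedStarGroup R] [Fintype n] {H : Matrix n n R} {B : Matrix n n ℝ}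
    (hHB : ∀ i j, ‖H i j‖ ≤ B i j) (x : n → R) :
    ‖star x ⬝ᵥ (H *ᵥ x)‖ ≤ (fun i => ‖x i‖) ⬝ᵥ (B *ᵥ fun i => ‖x i‖) := by
  refine (norm_sum_le _ _).trans (Finset.sum_le_sum fun i _ => ?_)
  refine (norm_mul_le _ _).trans ?_
  rw [Pi.star_apply, norm_star]
  gcongr
  refine (norm_sum_le _ _).trans (Finset.sum_le_sum fun j _ => ?_)
  exact (norm_mul_le _ _).trans (by gcongr; exact hHB i j)

namespace IsHermitian

variable {𝕜 n : Type*} [RCLike 𝕜] [Fintype n] [DecidableEq n] {A : Matrix n n 𝕜}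

/-- The spectral radius `ρ(A)`. -/
noncomputable def maxAbsEigenvalue [Nonempty n] (hA : A.IsHermitian) : ℝ :=
  Finset.univ.sup' Finset.univ_nonempty fun i => |hA.eigenvalues i|

theorem star_dotProduct_eigenvectorBasis_self (hA : A.IsHermitian) (i : n) :
    star ⇑(hA.eigenvectorBasis i) ⬝ᵥ ⇑(hA.eigenvectorBasis i) = 1 := by
  rw [dotProduct_comm, ← EuclideanSpace.inner_eq_star_dotProduct, inner_self_eq_norm_sq_to_K,
    hA.eigenvectorBasis.orthonormal.1 i]
  simp

theorem star_dotProduct_mulVec_eq_sum_eigenvalues (hA : A.IsHermitian) (x : n → 𝕜) :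
    star x ⬝ᵥ (A *ᵥ x) =
      ∑ i, (hA.eigenvalues i : 𝕜) * ‖inner 𝕜 (hA.eigenvectorBasis i) (WithLp.toLp 2 x)‖ ^ 2 := by
  set b := hA.eigenvectorBasis
  set z : EuclideanSpace 𝕜 n := WithLp.toLp 2 x
  have hT : (toEuclideanLin A).IsSymmetric := isSymmetric_toEuclideanLin_iff.mpr hA
  have hb : ∀ i, toEuclideanLin A (b i) = (hA.eigenvalues i : 𝕜) • b i := fun i => by
    rw [toLpLin_apply, hA.mulVec_eigenvectorBasis, ← RCLike.real_smul_eq_coe_smul]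
    rfl
  have hxz : star x ⬝ᵥ (A *ᵥ x) = inner 𝕜 z (toEuclideanLin A z) := by
    rw [EuclideanSpace.inner_eq_star_dotProduct, dotProduct_comm]
    rfl
  rw [hxz, ← b.sum_inner_mul_inner]
  refine Finset.sum_congr rfl fun i _ => ?_
  rw [← hT, hb, inner_smul_left, RCLike.conj_ofReal, ← inner_conj_symm z, mul_left_comm,
    RCLike.conj_mul]

variable [Nonempty n]

theorem abs_eigenvalues_le_maxAbsEigenvalue (hA : A.IsHermitian) (i : n) :
    |hA.eigenvalues i| ≤ hA.maxAbsEigenvalue :=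
  Finset.le_sup' (fun i => |hA.eigenvalues i|) (Finset.mem_univ i)

theorem exists_norm_star_dotProduct_mulVec_eq_maxAbsEigenvalue (hA : A.IsHermitian) :
    ∃ x : n → 𝕜, ∑ i, ‖x i‖ ^ 2 = 1 ∧ ‖star x ⬝ᵥ (A *ᵥ x)‖ = hA.maxAbsEigenvalue := by
  obtain ⟨i, -, hi⟩ := Finset.exists_mem_eq_sup' Finset.univ_nonempty
    fun i => |hA.eigenvalues i|
  refine ⟨hA.eigenvectorBasis i, ?_, ?_⟩
  · rw [← EuclideanSpace.norm_sq_eq, hA.eigenvectorBasis.orthonormal.1 i, one_pow]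
  · rw [maxAbsEigenvalue, hi, hA.mulVec_eigenvectorBasis, dotProduct_smul,
      star_dotProduct_eigenvectorBasis_self, norm_smul, norm_one, mul_one, Real.norm_eq_abs]

theorem norm_star_dotProduct_mulVec_le (hA : A.IsHermitian) (x : n → 𝕜) :
    ‖star x ⬝ᵥ (A *ᵥ x)‖ ≤ hA.maxAbsEigenvalue * ∑ i, ‖x i‖ ^ 2 := by
  set w := fun i => ‖inner 𝕜 (hA.eigenvectorBasis i) (WithLp.toLp 2 x)‖ ^ 2
  calc ‖star x ⬝ᵥ (A *ᵥ x)‖ ≤ ∑ i, |hA.eigenvalues i| * w i := by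
        rw [hA.star_dotProduct_mulVec_eq_sum_eigenvalues]
        refine (norm_sum_le _ _).trans_eq (Finset.sum_congr rfl fun i _ => ?_)
        simp [w]
    _ ≤ ∑ i, hA.maxAbsEigenvalue * w i := by
        gcongr with i
        exact hA.abs_eigenvalues_le_maxAbsEigenvalue i
    _ = hA.maxAbsEigenvalue * ∑ i, ‖x i‖ ^ 2 := by
        rw [← Finset.mul_sum, hA.eigenvectorBasis.sum_sq_norm_inner_right,
          EuclideanSpace.norm_sq_eq]

theorem maxAbsEigenvalue_le_of_norm_le {H : Matrix n n 𝕜} {B : Matrix n n ℝ}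
    (hH : H.IsHermitian) (hB : B.IsHermitian) (hHB : ∀ i j, ‖H i j‖ ≤ B i j) :
    hH.maxAbsEigenvalue ≤ hB.maxAbsEigenvalue := by
  obtain ⟨x, hx, hρ⟩ := hH.exists_norm_star_dotProduct_mulVec_eq_maxAbsEigenvalue
  set y : n → ℝ := fun i => ‖x i‖
  calc hH.maxAbsEigenvalue = ‖star x ⬝ᵥ (H *ᵥ x)‖ := hρ.symm
    _ ≤ y ⬝ᵥ (B *ᵥ y) := norm_star_dotProduct_mulVec_le_of_norm_le hHB x
    _ ≤ ‖star y ⬝ᵥ (B *ᵥ y)‖ := by rw [star_trivial]; exact Real.le_norm_self _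
    _ ≤ hB.maxAbsEigenvalue * ∑ i, ‖y i‖ ^ 2 := hB.norm_star_dotProduct_mulVec_le y
    _ = hB.maxAbsEigenvalue := by simp [y, hx]

end IsHermitian

end Matrix

theorem norm_hermAdj {V : Type*} (E : V → V → Prop) [DecidableRel E] (u v : V) :
    ‖hermAdj E u v‖ = adjUnderlying E u v := by
  by_cases h₁ : E u v <;> by_cases h₂ : E v u <;> simp [hermAdj, adjUnderlying, h₁, h₂]

theorem stmt8_general {V : Type*} [Fintype V] [DecidableEq V] [Nonempty V]
    (E : V → V → Prop) [DecidableRel E]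
    (hH : (hermAdj E).IsHermitian) (hA : (adjUnderlying E).IsHermitian) :
    Finset.univ.sup' Finset.univ_nonempty (fun i => |hH.eigenvalues i|) ≤
      Finset.univ.sup' Finset.univ_nonempty (fun i => |hA.eigenvalues i|) :=
  hH.maxAbsEigenvalue_le_of_norm_le hA fun u v => (norm_hermAdj E u v).le

/-- The spectral radius of the Hermitian adjacency matrix of a digraph is at most the
spectral radius of the adjacency matrix of its underlying graph. -/
theorem stmt8 {V : Type*} [Fintype V] [DecidableEq V] [Nonempty V]
    (E : V → V → Prop) [DecidableRel E] (hirr : ∀ v, ¬ E v v)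
    (hH : (hermAdj E).IsHermitian) (hA : (adjUnderlying E).IsHermitian) :
    Finset.univ.sup' Finset.univ_nonempty (fun i => |hH.eigenvalues i|) ≤
      Finset.univ.sup' Finset.univ_nonempty (fun i => |hA.eigenvalues i|) :=
  stmt8_general E hH hA
end

section
/- If X is an oriented graph (a digraph with no digons), then the H-spectrum of X is symmetric about 0: the multiset of eigenvalues of H(X), counted with multiplicity, is invariant under negation. Equivalently, if the eigenvalues are λ₁ ≥ … ≥ λ_n, then λ_j = −λ_{n−j+1} for all j. -/
/-!
Without digons `H(X)` is skew-symmetric, `Hᵀ = -H`, so `H` and `-H` have the same characteristic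
polynomial; by the spectral theorem its roots are both the eigenvalues of `H` and their negatives.
-/

open Matrix Complex

open Polynomial

theorem hermAdj_transpose_eq_neg {V : Type*} (E : V → V → Prop) [DecidableRel E]
    (hE : ∀ x y, ¬ (E x y ∧ E y x)) : (hermAdj E)ᵀ = -hermAdj E := by
  ext u v
  have := hE u v
  by_cases huv : E u v <;> by_cases hvu : E v u <;> simp_all [hermAdj]

namespace Matrix.IsHermitian

variable {𝕜 n : Type*} [RCLike 𝕜] [Fintype n] [DecidableEq n] {A : Matrix n n 𝕜}

lemma charpoly_neg (hA : A.IsHermitian) :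
    (-A).charpoly = ∏ i, (X - C (-(hA.eigenvalues i : 𝕜))) := by
  conv_lhs => rw [hA.spectral_theorem, ← map_neg, Unitary.conjStarAlgAut_apply,
    charpoly_mul_comm, ← mul_assoc]
  simp [charpoly_diagonal]

lemma map_eigenvalues_eq_map_neg_of_transpose_eq_neg (hA : A.IsHermitian) (hskew : Aᵀ = -A) :
    Multiset.map hA.eigenvalues Finset.univ.val =
      Multiset.map (fun i => -hA.eigenvalues i) Finset.univ.val := by
  have hchar : A.charpoly = (-A).charpoly := by rw [← hskew, charpoly_transpose]
  have hroots := congrArg Polynomial.roots hchar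
  rw [hA.roots_charpoly_eq_eigenvalues, hA.charpoly_neg, Polynomial.roots_prod] at hroots
  · apply Multiset.map_injective (RCLike.ofReal_injective (K := 𝕜))
    simpa [Multiset.map_map, Function.comp_def] using hroots
  · exact Finset.prod_ne_zero_iff.mpr fun i _ => X_sub_C_ne_zero _

end Matrix.IsHermitian

theorem stmt9_general {V : Type*} [Fintype V] [DecidableEq V]
    (E : V → V → Prop) [DecidableRel E]
    (hnodigon : ∀ x y, ¬ (E x y ∧ E y x))
    (hH : (hermAdj E).IsHermitian) :
    Multiset.map hH.eigenvalues Finset.univ.val =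
      Multiset.map (fun i => - hH.eigenvalues i) Finset.univ.val :=
  hH.map_eigenvalues_eq_map_neg_of_transpose_eq_neg (hermAdj_transpose_eq_neg E hnodigon)

/-- If `X` is an oriented graph (a digraph with no digons), then the `H`-spectrum of
`X` is symmetric about `0`: the multiset of eigenvalues of `H(X)` is invariant under
negation. -/
theorem stmt9 {V : Type*} [Fintype V] [DecidableEq V]
    (E : V → V → Prop) [DecidableRel E] (hirr : ∀ v, ¬ E v v)
    (hnodigon : ∀ x y, ¬ (E x y ∧ E y x))
    (hH : (hermAdj E).IsHermitian) :
    Multiset.map hH.eigenvalues Finset.univ.val =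
      Multiset.map (fun i => - hH.eigenvalues i) Finset.univ.val :=
  stmt9_general E hnodigon hH
end

section
/- If X is a digraph whose underlying graph Γ(X) is bipartite, then the H-spectrum of X is symmetric about 0: the multiset of eigenvalues of H(X), counted with multiplicity, is invariant under negation. -/
/-!
Let `A` be one side of the bipartition and `D` the diagonal matrix with entries `1` on `A` and
`-1` off it. Every nonzero entry of `H(X)` joins the two sides, so `D H D = -H` with `D² = 1`:
`H` and `-H` are similar, hence have the same characteristic polynomial. The roots of the
characteristic polynomial of `-H` are the negatives of those of `H`, and for a Hermitian matrix
these roots are its eigenvalues with multiplicity.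
-/

open Matrix Complex

open Polynomial

namespace Matrix

variable {n : Type*} [Fintype n] [DecidableEq n]

theorem charpoly_neg {R : Type*} [CommRing R] (M : Matrix n n R) :
    (-M).charpoly = (-1) ^ Fintype.card n * M.charpoly.comp (-X) := by
  have hmap : (charmatrix M).map (compRingHom (-X : R[X])) = -charmatrix (-M) := by
    ext i j : 1
    by_cases hij : i = j
    · subst hij
      simp only [coe_compRingHom, map_apply, charmatrix_apply_eq, sub_comp, X_comp, C_comp,
        Matrix.neg_apply, map_neg]
      ring
    · simp [charmatrix_apply_ne _ _ _ hij]
  have hcomp : M.charpoly.comp (-X) = (-1) ^ Fintype.card n * (-M).charpoly := by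
    rw [charpoly, ← coe_compRingHom_apply, RingHom.map_det, RingHom.mapMatrix_apply, hmap,
      det_neg, charpoly]
  rw [hcomp, ← mul_assoc, ← mul_pow, neg_one_mul, neg_neg, one_pow, one_mul]

theorem roots_charpoly_neg {R : Type*} [CommRing R] [IsDomain R] (M : Matrix n n R) :
    (-M).charpoly.roots = M.charpoly.roots.map Neg.neg := by
  rw [charpoly_neg, ← C_1, ← C_neg, ← C_pow,
    roots_C_mul _ (pow_ne_zero _ (neg_ne_zero.2 one_ne_zero)), roots_comp_neg_X]

theorem diagonal_mul_mul_diagonal_eq_neg {R : Type*} [CommRing R] (s : n → R) (M : Matrix n n R)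
    (hs : ∀ u v, M u v ≠ 0 → s u * s v = -1) :
    diagonal s * M * diagonal s = -M := by
  ext u v
  rw [mul_diagonal, diagonal_mul, neg_apply]
  by_cases huv : M u v = 0
  · simp [huv]
  · linear_combination M u v * hs u v huv

theorem charpoly_neg_eq_of_bipartite {R : Type*} [CommRing R] (A : Set n) (M : Matrix n n R)
    (hM : ∀ u v, M u v ≠ 0 → (u ∈ A ↔ v ∉ A)) :
    (-M).charpoly = M.charpoly := by
  classical
  set s : n → R := fun v => if v ∈ A then 1 else -1
  have hss : diagonal s * diagonal s = 1 := by
    rw [diagonal_mul_diagonal, ← diagonal_one]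
    congr 1; ext v; by_cases hv : v ∈ A <;> simp [s, hv]
  have hsign : ∀ u v, M u v ≠ 0 → s u * s v = -1 := by
    intro u v huv
    by_cases hu : u ∈ A
    · simp [s, hu, (hM u v huv).1 hu]
    · simp [s, hu, not_not.1 (mt (hM u v huv).2 hu)]
  rw [← diagonal_mul_mul_diagonal_eq_neg s M hsign, charpoly_mul_comm, ← mul_assoc, hss, one_mul]

theorem IsHermitian.map_eigenvalues_neg_of_charpoly_neg_eq {𝕜 : Type*} [RCLike 𝕜]
    {M : Matrix n n 𝕜} (hM : M.IsHermitian) (h : (-M).charpoly = M.charpoly) :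
    Multiset.map hM.eigenvalues Finset.univ.val =
      Multiset.map (fun i => -hM.eigenvalues i) Finset.univ.val := by
  have hroots := congrArg Polynomial.roots h
  rw [roots_charpoly_neg, hM.roots_charpoly_eq_eigenvalues, Multiset.map_map] at hroots
  refine Multiset.map_injective (RCLike.ofReal_injective (K := 𝕜)) ?_
  rw [Multiset.map_map, Multiset.map_map, ← hroots]
  simp [Function.comp_def]

end Matrix

theorem hermAdj_apply_ne_zero {V : Type*} (E : V → V → Prop) [DecidableRel E] {u v : V}
    (h : hermAdj E u v ≠ 0) : E u v ∨ E v u := by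
  by_contra! h'
  simp [hermAdj, h'.1, h'.2] at h

theorem stmt10_general {V : Type*} [Fintype V] [DecidableEq V]
    (E : V → V → Prop) [DecidableRel E]
    (hbip : ∃ A : Set V, ∀ u v, (E u v ∨ E v u) → (u ∈ A ↔ v ∉ A))
    (hH : (hermAdj E).IsHermitian) :
    Multiset.map hH.eigenvalues Finset.univ.val =
      Multiset.map (fun i => - hH.eigenvalues i) Finset.univ.val := by
  obtain ⟨A, hA⟩ := hbip
  exact hH.map_eigenvalues_neg_of_charpoly_neg_eq <| charpoly_neg_eq_of_bipartite A _
    fun u v huv => hA u v (hermAdj_apply_ne_zero E huv)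

/-- If the underlying graph of a digraph `X` is bipartite (there is a set `A` of
vertices such that every edge of the underlying graph has exactly one endpoint in
`A`), then the `H`-spectrum of `X` is symmetric about `0`. -/
theorem stmt10 {V : Type*} [Fintype V] [DecidableEq V]
    (E : V → V → Prop) [DecidableRel E] (hirr : ∀ v, ¬ E v v)
    (hbip : ∃ A : Set V, ∀ u v, (E u v ∨ E v u) → (u ∈ A ↔ v ∉ A))
    (hH : (hermAdj E).IsHermitian) :
    Multiset.map hH.eigenvalues Finset.univ.val =
      Multiset.map (fun i => - hH.eigenvalues i) Finset.univ.val :=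
  stmt10_general E hbip hH
end

section
/- Let X be a digraph and S ⊆ V(X) a set of vertices such that no arc with exactly one endpoint in S is part of a digon. Let X′ be the digraph obtained from X by the local reversal at S, i.e. X′ has arc set obtained from that of X by replacing every arc xy with exactly one endpoint in S by the reversed arc yx (arcs with both or neither endpoint in S are unchanged). Then H(X) and H(X′) have the same characteristic polynomial; in particular X and X′ are H-cospectral. -/
open Matrix Complex

/-- The local reversal of a digraph at the vertex set `S`: every arc with exactly
one endpoint in `S` is reversed, all other arcs are unchanged. -/
def locRev {V : Type*} [DecidableEq V] (S : Finset V) (E : V → V → Prop) :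
    V → V → Prop :=
  fun x y => ((x ∈ S ↔ y ∈ S) ∧ E x y) ∨ (¬ (x ∈ S ↔ y ∈ S) ∧ E y x)

instance {V : Type*} [DecidableEq V] (S : Finset V) (E : V → V → Prop)
    [DecidableRel E] : DecidableRel (locRev S E) := fun x y =>
  inferInstanceAs (Decidable (((x ∈ S ↔ y ∈ S) ∧ E x y) ∨ (¬ (x ∈ S ↔ y ∈ S) ∧ E y x)))

/-- If no arc with exactly one endpoint in `S` is part of a digon, then the digraph
and its local reversal at `S` are `H`-cospectral. -/
theorem stmt11 {V : Type*} [Fintype V] [DecidableEq V]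
    (E : V → V → Prop) [DecidableRel E] (hirr : ∀ v, ¬ E v v)
    (S : Finset V)
    (hS : ∀ x y, ¬ (x ∈ S ↔ y ∈ S) → ¬ (E x y ∧ E y x)) :
    (hermAdj E).charpoly = (hermAdj (locRev S E)).charpoly := by
  set d : V → ℂ := fun v => if v ∈ S then (-1 : ℂ) else 1 with hd
  set D : Matrix V V ℂ := Matrix.diagonal d with hD
  have hd2 : ∀ v, d v * d v = 1 := by
    intro v; by_cases hv : v ∈ S <;> simp [hd, hv]
  have key : hermAdj (locRev S E) = D * hermAdj E * D := by
    ext x y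
    rw [hD, Matrix.mul_diagonal, Matrix.diagonal_mul]
    by_cases hxy : (x ∈ S ↔ y ∈ S)
    · have hdxy : d x * d y = 1 := by
        by_cases hx : x ∈ S
        · simp [hd, hx, hxy.mp hx]
        · have hy : y ∉ S := fun h => hx (hxy.mpr h)
          simp [hd, hx, hy]
      have h1 : locRev S E x y ↔ E x y := by simp [locRev, hxy]
      have h2 : locRev S E y x ↔ E y x := by simp [locRev, hxy.symm]
      simp only [hermAdj, h1, h2]
      rw [show ∀ a : ℂ, d x * a * d y = a * (d x * d y) from fun a => by ring, hdxy, mul_one]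
    · have hyx : ¬ (y ∈ S ↔ x ∈ S) := fun h => hxy h.symm
      have hdxy : d x * d y = -1 := by
        by_cases hx : x ∈ S
        · have hy : y ∉ S := fun h => hxy ⟨fun _ => h, fun _ => hx⟩
          simp [hd, hx, hy]
        · have hy : y ∈ S := by
            by_contra hy
            exact hxy ⟨fun h => absurd h hx, fun h => absurd h hy⟩
          simp [hd, hx, hy]
      have hno := hS x y hxy
      have h1 : locRev S E x y ↔ E y x := by simp [locRev, hxy]
      have h2 : locRev S E y x ↔ E x y := by simp [locRev, hyx]
      simp only [hermAdj, h1, h2]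
      rw [show ∀ a : ℂ, d x * a * d y = a * (d x * d y) from fun a => by ring, hdxy]
      by_cases he1 : E x y
      · have he2 : ¬ E y x := fun h => hno ⟨he1, h⟩
        simp [he1, he2]
      · by_cases he2 : E y x <;> simp [he1, he2]
  rw [key]
  set H := hermAdj E
  set Dc : Matrix V V (Polynomial ℂ) := Matrix.diagonal (fun v => Polynomial.C (d v)) with hDc
  have hDcDc : Dc * Dc = 1 := by
    rw [hDc, Matrix.diagonal_mul_diagonal]
    have hfun : (fun v => Polynomial.C (d v) * Polynomial.C (d v))
        = fun _ : V => (1 : Polynomial ℂ) := by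
      funext v; rw [← Polynomial.C_mul, hd2 v, Polynomial.C_1]
    rw [hfun, Matrix.diagonal_one]
  have hDHD : ∀ i j, (D * H * D) i j = d i * H i j * d j := by
    intro i j
    rw [hD, Matrix.mul_diagonal, Matrix.diagonal_mul]
  have hexpand : Matrix.charmatrix (D * H * D) = Dc * Matrix.charmatrix H * Dc := by
    apply Matrix.ext
    intro i j
    rw [hDc, Matrix.mul_diagonal, Matrix.diagonal_mul]
    by_cases h : i = j
    · subst h
      rw [Matrix.charmatrix_apply_eq, Matrix.charmatrix_apply_eq, hDHD, Polynomial.C_mul, Polynomial.C_mul]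
      have hC : Polynomial.C (d i) * Polynomial.C (d i) = 1 := by
        rw [← Polynomial.C_mul, hd2 i, Polynomial.C_1]
      linear_combination (-(Polynomial.X : Polynomial ℂ)) * hC
    · rw [Matrix.charmatrix_apply_ne _ _ _ h, Matrix.charmatrix_apply_ne _ _ _ h, hDHD,
        Polynomial.C_mul, Polynomial.C_mul]
      ring
  unfold Matrix.charpoly
  rw [hexpand, Matrix.det_mul, Matrix.det_mul]
  have hdet : Dc.det * Dc.det = 1 := by rw [← Matrix.det_mul, hDcDc, Matrix.det_one]
  calc (Matrix.charmatrix H).det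
      = Dc.det * Dc.det * (Matrix.charmatrix H).det := by rw [hdet, one_mul]
    _ = Dc.det * (Matrix.charmatrix H).det * Dc.det := by ring
end

section
/- Let X be a digraph and S ⊆ V(X) a set of vertices such that every arc with exactly one endpoint in S is part of a digon. Let X′ be the digraph obtained from X by replacing, for each digon {x,y} with x ∉ S and y ∈ S, the digon by the single arc xy (i.e. deleting the arc yx from S to the complement, for every such crossing digon). Then H(X) and H(X′) have the same characteristic polynomial; in particular X and X′ are H-cospectral. -/
open Matrix Complex

/-- The digraph obtained by deleting, from every digon crossing the cut determined
by `S`, the arc that goes from `S` to its complement (so each crossing digon `{x,y}`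
with `x ∉ S`, `y ∈ S` is replaced by the single arc `x → y`). -/
def digonCut {V : Type*} [DecidableEq V] (S : Finset V) (E : V → V → Prop) :
    V → V → Prop :=
  fun a b => E a b ∧ ¬ (a ∈ S ∧ b ∉ S)

instance {V : Type*} [DecidableEq V] (S : Finset V) (E : V → V → Prop)
    [DecidableRel E] : DecidableRel (digonCut S E) := fun a b =>
  inferInstanceAs (Decidable (E a b ∧ ¬ (a ∈ S ∧ b ∉ S)))

lemma conj_charpoly {n : Type*} [Fintype n] [DecidableEq n]
    (P Q A : Matrix n n ℂ) (hPQ : P * Q = 1) :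
    (P * A * Q).charpoly = A.charpoly := by
  classical
  set P' := P.map Polynomial.C with hP'
  set Q' := Q.map Polynomial.C with hQ'
  have hPQ' : P' * Q' = 1 := by
    rw [hP', hQ', ← Matrix.map_mul, hPQ]
    ext i j
    simp [Matrix.one_apply, apply_ite Polynomial.C]
  have hcm : charmatrix (P * A * Q) = P' * charmatrix A * Q' := by
    rw [charmatrix, charmatrix]
    have hmap : ((Polynomial.C : ℂ →+* Polynomial ℂ).mapMatrix (P * A * Q)) =
        P' * (Polynomial.C : ℂ →+* Polynomial ℂ).mapMatrix A * Q' := by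
      simp [hP', hQ', Matrix.map_mul]
    rw [hmap, Matrix.mul_sub, Matrix.sub_mul]
    congr 1
    symm
    have hc : Commute (Matrix.scalar n (Polynomial.X : Polynomial ℂ)) P' :=
      Matrix.scalar_commute _ (fun r' => Commute.all _ _) _
    calc P' * Matrix.scalar n (Polynomial.X : Polynomial ℂ) * Q'
        = Matrix.scalar n (Polynomial.X : Polynomial ℂ) * (P' * Q') := by
          rw [← hc.eq, Matrix.mul_assoc]
      _ = Matrix.scalar n (Polynomial.X : Polynomial ℂ) := by rw [hPQ', mul_one]
  unfold Matrix.charpoly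
  rw [hcm, Matrix.det_mul, Matrix.det_mul]
  have hdet : P'.det * Q'.det = 1 := by
    rw [← Matrix.det_mul, hPQ', Matrix.det_one]
  calc P'.det * (charmatrix A).det * Q'.det
      = P'.det * Q'.det * (charmatrix A).det := by ring
    _ = (charmatrix A).det := by rw [hdet, one_mul]

/-- If every arc with exactly one endpoint in `S` is part of a digon, then replacing
each digon `{x,y}` crossing the cut (with `x ∉ S`, `y ∈ S`) by the single arc `x → y`
yields an `H`-cospectral digraph. -/
theorem stmt12 {V : Type*} [Fintype V] [DecidableEq V]
    (E : V → V → Prop) [DecidableRel E] (hirr : ∀ v, ¬ E v v)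
    (S : Finset V)
    (hS : ∀ x y, ¬ (x ∈ S ↔ y ∈ S) → E x y → E y x) :
    (hermAdj E).charpoly = (hermAdj (digonCut S E)).charpoly := by
  classical
  set d : V → ℂ := fun v => if v ∈ S then -Complex.I else 1 with hd
  set q : V → ℂ := fun v => if v ∈ S then Complex.I else 1 with hq
  have hdq : Matrix.diagonal q * Matrix.diagonal d = 1 := by
    rw [Matrix.diagonal_mul_diagonal]
    ext i j
    by_cases h : i ∈ S <;>
      simp [Matrix.diagonal_apply, Matrix.one_apply, hq, hd, h, Complex.I_mul_I]
  have key : Matrix.diagonal d * hermAdj E = hermAdj (digonCut S E) * Matrix.diagonal d := by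
    ext u v
    rw [Matrix.diagonal_mul, Matrix.mul_diagonal]
    by_cases hu : u ∈ S <;> by_cases hv : v ∈ S
    · -- both in S: unchanged
      simp only [hd, hu, hv, if_pos, hermAdj, digonCut]
      by_cases h1 : E u v <;> by_cases h2 : E v u <;>
        simp [h1, h2, hu, hv, mul_comm]
    · -- u ∈ S, v ∉ S : crossing
      have hcross : E u v → E v u := fun h => hS u v (by simp [hu, hv]) h
      have hcross' : E v u → E u v := fun h => hS v u (by simp [hu, hv]) h
      simp only [hd, hu, hv, hermAdj, digonCut]
      by_cases h1 : E u v
      · have h2 := hcross h1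
        simp [h1, h2, hu, hv]
      · have h2 : ¬ E v u := fun h => h1 (hcross' h)
        simp [h1, h2]
    · -- u ∉ S, v ∈ S : crossing
      have hcross : E u v → E v u := fun h => hS u v (by simp [hu, hv]) h
      have hcross' : E v u → E u v := fun h => hS v u (by simp [hu, hv]) h
      simp only [hd, hu, hv, hermAdj, digonCut]
      by_cases h1 : E u v
      · have h2 := hcross h1
        simp [h1, h2, hu, hv, Complex.I_mul_I]
      · have h2 : ¬ E v u := fun h => h1 (hcross' h)
        simp [h1, h2]
    · -- both out of S: unchanged
      simp only [hd, hu, hv, hermAdj, digonCut]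
      by_cases h1 : E u v <;> by_cases h2 : E v u <;>
        simp [h1, h2, hu, hv]
  have : hermAdj E = Matrix.diagonal q * hermAdj (digonCut S E) * Matrix.diagonal d := by
    calc hermAdj E = 1 * hermAdj E := by rw [one_mul]
      _ = Matrix.diagonal q * Matrix.diagonal d * hermAdj E := by rw [hdq]
      _ = Matrix.diagonal q * (Matrix.diagonal d * hermAdj E) := by rw [Matrix.mul_assoc]
      _ = Matrix.diagonal q * (hermAdj (digonCut S E) * Matrix.diagonal d) := by rw [key]
      _ = Matrix.diagonal q * hermAdj (digonCut S E) * Matrix.diagonal d := by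
          rw [Matrix.mul_assoc]
  rw [this]
  exact conj_charpoly _ _ _ hdq
end

section
/- If X is a digraph whose underlying graph Γ(X) is a forest (contains no cycles), then H(X) is cospectral with the adjacency matrix A(Γ(X)) of the underlying graph: the characteristic polynomial of H(X) equals the characteristic polynomial of A(Γ(X)). -/
open Matrix Complex

instance {V : Type*} [DecidableEq V] (E : V → V → Prop) [DecidableRel E] :
    DecidableRel (underlying E).Adj := fun u v =>
  inferInstanceAs (Decidable (u ≠ v ∧ (E u v ∨ E v u)))

/-!
Edge weights `ε` in a commutative group with `ε u v * ε v u = 1` on a finite forest are a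
coboundary, `ε u v = (f u)⁻¹ * f v`: delete an edge `s(a, b)`, take such an `f` for the smaller
forest, and rescale it by a constant on the component of `b`, which no longer meets `a` since
the edge was a bridge. The entries of `H(X)` across an edge of `Γ(X)` multiply with their
transposes to `1`, so `diag f` conjugates `H(X)` into `A(Γ(X))`.
-/

namespace SimpleGraph

variable {V α : Type*} {G : SimpleGraph V}

section Potential

variable [CommGroup α]

def IsPotential (G : SimpleGraph V) (ε : V → V → α) (f : V → α) : Prop :=
  ∀ ⦃u v⦄, G.Adj u v → f v = f u * ε u v

lemma exists_isPotential_of_isBridge {a b : V} (hab : G.IsBridge s(a, b)) {ε : V → V → α}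
    (hε : ε a b * ε b a = 1) {f : V → α} (hf : (G.deleteEdges {s(a, b)}).IsPotential ε f) :
    ∃ g, G.IsPotential ε g := by
  classical
  set G' := G.deleteEdges {s(a, b)}
  have hab' : G'.connectedComponentMk a ≠ G'.connectedComponentMk b := fun h =>
    isBridge_iff.mp hab (ConnectedComponent.exact h)
  refine ⟨fun v => if G'.connectedComponentMk v = G'.connectedComponentMk b
    then f v * ((f b)⁻¹ * f a * ε a b) else f v, fun u v huv => ?_⟩
  by_cases he : s(u, v) = s(a, b)
  · rcases Sym2.eq_iff.mp he with ⟨rfl, rfl⟩ | ⟨rfl, rfl⟩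
    · simp only [if_neg hab', if_true]
      group
    · simp only [if_neg hab', if_true, mul_assoc, mul_inv_cancel_left, hε, mul_one]
  · have huv' : G'.Adj u v := (deleteEdges_adj ..).mpr ⟨huv, he⟩
    simp only [ConnectedComponent.connectedComponentMk_eq_of_adj huv']
    split_ifs
    · rw [hf huv', mul_right_comm]
    · exact hf huv'

lemma IsAcyclic.exists_isPotential (hG : G.IsAcyclic) (hfin : G.edgeSet.Finite)
    {ε : V → V → α} (hε : ∀ ⦃u v⦄, G.Adj u v → ε u v * ε v u = 1) :
    ∃ f, G.IsPotential ε f := by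
  suffices ∀ S : Set (Sym2 V), S.Finite → ∀ G : SimpleGraph V, G.edgeSet = S → G.IsAcyclic →
      (∀ ⦃u v⦄, G.Adj u v → ε u v * ε v u = 1) → ∃ f, G.IsPotential ε f from
    this _ hfin G rfl hG hε
  intro S hS
  induction S, hS using Set.Finite.induction_on with
  | empty =>
    intro G hGS _ _
    exact ⟨1, fun u v huv => absurd (hGS ▸ G.mem_edgeSet.mpr huv) (Set.notMem_empty _)⟩
  | @insert e S he _ ih =>
    intro G hGS hG hε
    induction e using Sym2.ind with
    | _ a b =>
      have hab : G.Adj a b := G.mem_edgeSet.mp (hGS ▸ Set.mem_insert _ _)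
      obtain ⟨f, hf⟩ := ih (G.deleteEdges {s(a, b)})
        (by rw [edgeSet_deleteEdges, hGS, Set.insert_sdiff_self_of_notMem he])
        (hG.anti (deleteEdges_le _)) (fun u v huv => hε huv.1)
      exact exists_isPotential_of_isBridge (isAcyclic_iff_forall_adj_isBridge.mp hG hab)
        (hε hab) hf

end Potential

theorem _root_.Matrix.charpoly_eq_of_mul_eq_mul {n R : Type*} [Fintype n] [DecidableEq n]
    [CommRing R] {A B P : Matrix n n R} (hP : IsUnit P) (h : A * P = P * B) :
    A.charpoly = B.charpoly := by
  obtain ⟨P, rfl⟩ := hP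
  calc A.charpoly = (A * P * (P⁻¹).val).charpoly := by rw [mul_assoc, Units.mul_inv, mul_one]
    _ = ((P⁻¹).val * (P * B)).charpoly := by rw [charpoly_mul_comm, h]
    _ = B.charpoly := by rw [← mul_assoc, Units.inv_mul, one_mul]

theorem IsAcyclic.charpoly_eq_charpoly_adjMatrix [Fintype V] [DecidableEq V]
    [DecidableRel G.Adj] {R : Type*} [CommRing R] (hG : G.IsAcyclic) {M : Matrix V V R}
    (hM : ∀ ⦃u v⦄, G.Adj u v → M u v * M v u = 1) (hM₀ : ∀ ⦃u v⦄, ¬ G.Adj u v → M u v = 0) :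
    M.charpoly = (G.adjMatrix R).charpoly := by
  let ε : V → V → Rˣ := fun u v =>
    if h : G.Adj u v then Units.mkOfMulEqOne _ _ (hM h) else 1
  have hε : ∀ ⦃u v⦄, G.Adj u v → ε u v * ε v u = 1 := fun u v huv => by
    ext
    simp [ε, huv, huv.symm, hM huv]
  obtain ⟨f, hf⟩ := hG.exists_isPotential (Set.toFinite _) hε
  refine (charpoly_eq_of_mul_eq_mul (P := diagonal fun v => (f v : R))
    (isUnit_diagonal.mpr (Pi.isUnit_iff.mpr fun v => (f v).isUnit)) ?_).symm
  ext u v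
  rw [mul_diagonal, diagonal_mul, adjMatrix_apply]
  by_cases huv : G.Adj u v
  · simp [hf huv, ε, huv]
  · simp [huv, hM₀ huv]

end SimpleGraph

lemma hermAdj_mul_hermAdj_swap {V : Type*} {E : V → V → Prop} [DecidableRel E] {u v : V}
    (huv : (underlying E).Adj u v) : hermAdj E u v * hermAdj E v u = 1 := by
  rcases huv with ⟨-, huv | hvu⟩ <;> by_cases h : E v u <;> by_cases h' : E u v <;>
    simp_all [hermAdj]

lemma hermAdj_eq_zero_of_not_adj {V : Type*} {E : V → V → Prop} [DecidableRel E]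
    (hirr : ∀ v, ¬ E v v) {u v : V} (huv : ¬ (underlying E).Adj u v) : hermAdj E u v = 0 := by
  by_cases h : u = v
  · subst h
    simp [hermAdj, hirr]
  · have : ¬ E u v ∧ ¬ E v u := not_or.mp fun h' => huv ⟨h, h'⟩
    simp [hermAdj, this]

/-- If the underlying graph of a digraph `X` is a forest, then `H(X)` is cospectral
with the adjacency matrix of the underlying graph. -/
theorem stmt13 {V : Type*} [Fintype V] [DecidableEq V]
    (E : V → V → Prop) [DecidableRel E] (hirr : ∀ v, ¬ E v v)
    (hforest : (underlying E).IsAcyclic) :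
    (hermAdj E).charpoly = ((underlying E).adjMatrix ℂ).charpoly :=
  hforest.charpoly_eq_charpoly_adjMatrix (fun _ _ => hermAdj_mul_hermAdj_swap)
    (fun _ _ => hermAdj_eq_zero_of_not_adj hirr)
end

section
/- For n ≥ 3, let N_n be the necklace digraph: its vertex set is {v_j : j ∈ ℤ_{2n}} ∪ {w_k : k ∈ ℤ_n}, and its arcs are v_j v_{j+1} for all j ∈ ℤ_{2n}, together with v_{2k} w_k and v_{2k+2} w_k for all k ∈ ℤ_n. Then the Hermitian adjacency matrix H = H(N_n) satisfies H³ = 4H. -/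
/-! All arcs of `N_n` join an even vertex `v_{2k}` to an odd vertex `v_{2l+1}` or to some `w_l`.
Listing the `2n` vertices `v_{2l+1}, w_l` before the `n` vertices `v_{2k}` makes `H` block
anti-diagonal, `H = [[0, -i N], [i Nᵀ, 0]]`, where `N = (1 - P; 1 + P)` for the cyclic shift `P`
on `ℤ_n`. Since `P` is orthogonal, `Nᵀ N = (1 - P)ᵀ (1 - P) + (1 + P)ᵀ (1 + P) = 2 + 2 PᵀP = 4`,
and whenever `Y X = 4`, `[[0, X], [Y, 0]]³ = [[0, X Y X], [Y X Y, 0]] = 4 [[0, X], [Y, 0]]`. -/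

open Matrix Complex

/-- The arc relation of the necklace digraph `N_n`: vertices are `v_j` (`j ∈ ℤ_{2n}`,
encoded as `Sum.inl j` with `j : Fin (2*n)`) and `w_k` (`k ∈ ℤ_n`, encoded as
`Sum.inr k`), with arcs `v_j → v_{j+1}`, `v_{2k} → w_k` and `v_{2k+2} → w_k`
(indices of `v`'s modulo `2n`, of `w`'s modulo `n`). -/
def necklace (n : ℕ) : (Fin (2 * n) ⊕ Fin n) → (Fin (2 * n) ⊕ Fin n) → Prop :=
  fun a b =>
    match a, b with
    | Sum.inl j, Sum.inl j' => j'.val = (j.val + 1) % (2 * n)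
    | Sum.inl j, Sum.inr k =>
        j.val = (2 * k.val) % (2 * n) ∨ j.val = (2 * k.val + 2) % (2 * n)
    | _, _ => False

instance (n : ℕ) : DecidableRel (necklace n) := fun a b =>
  match a, b with
  | Sum.inl j, Sum.inl j' => inferInstanceAs (Decidable (j'.val = (j.val + 1) % (2 * n)))
  | Sum.inl j, Sum.inr k =>
      inferInstanceAs
        (Decidable (j.val = (2 * k.val) % (2 * n) ∨ j.val = (2 * k.val + 2) % (2 * n)))
  | Sum.inr _, Sum.inl _ => inferInstanceAs (Decidable False)
  | Sum.inr _, Sum.inr _ => inferInstanceAs (Decidable False)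

namespace Matrix

theorem fromBlocks_zero_pow_three {R m n : Type*} [CommSemiring R] [Fintype m] [Fintype n]
    [DecidableEq m] [DecidableEq n] (X : Matrix m n R) (Y : Matrix n m R) (c : R)
    (h : Y * X = c • 1) : fromBlocks 0 X Y 0 ^ 3 = c • fromBlocks 0 X Y 0 := by
  have hX : X * Y * X = c • X := by rw [Matrix.mul_assoc, h, Matrix.mul_smul, Matrix.mul_one]
  have hY : Y * X * Y = c • Y := by rw [h, Matrix.smul_mul, Matrix.one_mul]
  simp [pow_three, fromBlocks_multiply, fromBlocks_smul, ← Matrix.mul_assoc, hX, hY]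

theorem transpose_fromRows_one_sub_one_add_mul {R n : Type*} [CommRing R] [Fintype n]
    [DecidableEq n] {S : Matrix n n R} (h : Sᵀ * S = 1) :
    (fromRows (1 - S) (1 + S))ᵀ * fromRows (1 - S) (1 + S) = (4 : R) • 1 := by
  rw [transpose_fromRows, fromCols_mul_fromRows]
  simp only [transpose_sub, transpose_add, transpose_one, Matrix.sub_mul, Matrix.mul_sub,
    Matrix.add_mul, Matrix.mul_add, Matrix.one_mul, Matrix.mul_one, h]
  module

end Matrix

namespace Fin

theorem add_one_eq_iff_val {n : ℕ} [NeZero n] (l k : Fin n) :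
    l + 1 = k ↔ (l.val + 1) % n = k.val := by
  rw [Fin.ext_iff, Fin.val_add, Fin.val_one']
  simp

theorem add_one_ne_self {n : ℕ} [NeZero n] (hn : 2 ≤ n) (l : Fin n) : l + 1 ≠ l := by
  rw [Ne, add_eq_left, Fin.ext_iff, Fin.val_one', Fin.val_zero, Nat.mod_eq_of_lt hn]
  omega

end Fin

/-- The vertex order `(v_{2l+1} | w_l) | v_{2k}`, separating the two sides of the bipartition. -/
def necklaceEquiv (n : ℕ) : (Fin n ⊕ Fin n) ⊕ Fin n ≃ Fin (2 * n) ⊕ Fin n where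
  toFun
    | .inl (.inl l) => .inl ⟨2 * l + 1, by omega⟩
    | .inl (.inr l) => .inr l
    | .inr k => .inl ⟨2 * k, by omega⟩
  invFun
    | .inl j => if j.val % 2 = 1 then .inl (.inl ⟨j / 2, by omega⟩) else .inr ⟨j / 2, by omega⟩
    | .inr l => .inl (.inr l)
  left_inv := by
    rintro ((l | l) | k)
    · simp only [Nat.mul_add_mod_self_left, Nat.mod_succ, ↓reduceIte, Sum.inl.injEq, Fin.ext_iff]
      omega
    · rfl
    · simp
  right_inv := by
    rintro (j | l)
    · by_cases h : j.val % 2 = 1 <;> simp only [h, ↓reduceIte, Sum.inl.injEq, Fin.ext_iff] <;> omega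
    · rfl

/-- The permutation matrix of `l ↦ l + 1` has its `1` in position `(l, l + 1)`. -/
noncomputable def necklaceIncidence (n : ℕ) [NeZero n] : Matrix (Fin n ⊕ Fin n) (Fin n) ℂ :=
  fromRows (1 - (Equiv.addRight (1 : Fin n)).permMatrix ℂ)
    (1 + (Equiv.addRight (1 : Fin n)).permMatrix ℂ)

section arcs

variable (n : ℕ)

theorem necklace_odd_even [NeZero n] (l k : Fin n) :
    necklace n (necklaceEquiv n (.inl (.inl l))) (necklaceEquiv n (.inr k)) ↔ l + 1 = k := by
  rw [Fin.add_one_eq_iff_val]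
  simp only [necklaceEquiv, Equiv.coe_fn_mk, necklace]
  rw [show 2 * l.val + 1 + 1 = 2 * (l.val + 1) by ring, Nat.mul_mod_mul_left]
  omega

theorem necklace_even_odd (l k : Fin n) :
    necklace n (necklaceEquiv n (.inr k)) (necklaceEquiv n (.inl (.inl l))) ↔ l = k := by
  rw [Fin.ext_iff]
  simp only [necklaceEquiv, Equiv.coe_fn_mk, necklace]
  rw [Nat.mod_eq_of_lt (by omega)]
  omega

theorem necklace_even_w [NeZero n] (l k : Fin n) :
    necklace n (necklaceEquiv n (.inr k)) (necklaceEquiv n (.inl (.inr l))) ↔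
      l = k ∨ l + 1 = k := by
  rw [Fin.add_one_eq_iff_val, Fin.ext_iff]
  simp only [necklaceEquiv, Equiv.coe_fn_mk, necklace]
  rw [show 2 * l.val + 2 = 2 * (l.val + 1) by ring, Nat.mul_mod_mul_left, Nat.mul_mod_mul_left,
    Nat.mod_eq_of_lt l.isLt]
  omega

theorem not_necklace_odd_odd (l l' : Fin n) :
    ¬ necklace n (necklaceEquiv n (.inl (.inl l))) (necklaceEquiv n (.inl (.inl l'))) := by
  simp only [necklaceEquiv, Equiv.coe_fn_mk, necklace]
  rw [show 2 * l.val + 1 + 1 = 2 * (l.val + 1) by ring, Nat.mul_mod_mul_left]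
  omega

theorem not_necklace_odd_w (l l' : Fin n) :
    ¬ necklace n (necklaceEquiv n (.inl (.inl l))) (necklaceEquiv n (.inl (.inr l'))) := by
  simp only [necklaceEquiv, Equiv.coe_fn_mk, necklace]
  rw [show 2 * l'.val + 2 = 2 * (l'.val + 1) by ring, Nat.mul_mod_mul_left, Nat.mul_mod_mul_left]
  omega

theorem not_necklace_even_even (k k' : Fin n) :
    ¬ necklace n (necklaceEquiv n (.inr k)) (necklaceEquiv n (.inr k')) := by
  simp only [necklaceEquiv, Equiv.coe_fn_mk, necklace]
  rw [Nat.mod_eq_of_lt (by omega)]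
  omega

theorem not_necklace_w (l : Fin n) (v : Fin (2 * n) ⊕ Fin n) :
    ¬ necklace n (necklaceEquiv n (.inl (.inr l))) v := by
  cases v <;> exact id

end arcs

theorem submatrix_hermAdj_necklace (n : ℕ) [NeZero n] (hn : 2 ≤ n) :
    (hermAdj (necklace n)).submatrix (necklaceEquiv n) (necklaceEquiv n) =
      fromBlocks 0 (-I • necklaceIncidence n) (I • (necklaceIncidence n)ᵀ) 0 := by
  have hne := Fin.add_one_ne_self hn
  ext (((l | l) | k)) (((l' | l') | k')) <;>
    simp only [submatrix_apply, hermAdj, necklace_odd_even, necklace_even_odd, necklace_even_w,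
      not_necklace_odd_odd, not_necklace_odd_w, not_necklace_even_even, not_necklace_w,
      and_self, and_false, false_and, ↓reduceIte, necklaceIncidence, Equiv.Perm.permMatrix,
      fromBlocks_apply₁₁, fromBlocks_apply₁₂, fromBlocks_apply₂₁, fromBlocks_apply₂₂,
      fromRows_apply_inl, fromRows_apply_inr, Matrix.zero_apply, Matrix.neg_apply, neg_smul,
      Matrix.smul_apply, transpose_apply, Matrix.sub_apply, Matrix.add_apply, one_apply,
      PEquiv.toMatrix_apply, Equiv.toPEquiv_apply, Equiv.coe_addRight, Option.mem_def,
      Option.some.injEq, smul_eq_mul]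
  all_goals split_ifs <;> simp_all

theorem necklaceIncidence_transpose_mul (n : ℕ) [NeZero n] :
    (I • (necklaceIncidence n)ᵀ) * (-I • necklaceIncidence n) = (4 : ℂ) • 1 := by
  have hP : ((Equiv.addRight (1 : Fin n)).permMatrix ℂ)ᵀ *
      (Equiv.addRight (1 : Fin n)).permMatrix ℂ = 1 := by
    rw [transpose_permMatrix, ← permMatrix_mul, mul_inv_cancel, permMatrix_one]
  rw [Matrix.smul_mul, Matrix.mul_smul, smul_smul, necklaceIncidence,
    transpose_fromRows_one_sub_one_add_mul hP, smul_smul]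
  simp

/-- For `n ≥ 3`, the Hermitian adjacency matrix of the necklace digraph `N_n`
satisfies `H³ = 4H`. -/
theorem stmt14 (n : ℕ) (hn : 3 ≤ n) :
    hermAdj (necklace n) ^ 3 = (4 : ℂ) • hermAdj (necklace n) := by
  have : NeZero n := ⟨by omega⟩
  apply (reindexAlgEquiv ℂ ℂ (necklaceEquiv n).symm).injective
  rw [map_pow, map_smul, coe_reindexAlgEquiv, reindex_apply, Equiv.symm_symm,
    submatrix_hermAdj_necklace n (by omega)]
  exact fromBlocks_zero_pow_three _ _ _ (necklaceIncidence_transpose_mul n)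
end

section
/- For n ≥ 3, let C̃_n be the oriented cycle on vertex set ℤ_n with arcs j → j+1 for j = 0,…,n−2, together with the arc 0 → n−1 (the directed n-cycle with one arc reversed). Then the multiset of eigenvalues of H(C̃_n) is { 2·sin((2j+1)π/n) : j = 0, 1, …, n−1 }. -/
open Matrix Complex Real

/-- The arc relation of `C̃_n`, the directed `n`-cycle with one arc reversed:
arcs `j → j+1` for `j = 0, …, n-2`, together with the arc `0 → n-1`. -/
def cTilde (n : ℕ) : Fin n → Fin n → Prop :=
  fun a b => (a.val + 1 = b.val) ∨ (a.val = 0 ∧ b.val = n - 1)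

instance (n : ℕ) : DecidableRel (cTilde n) := fun a b =>
  inferInstanceAs (Decidable ((a.val + 1 = b.val) ∨ (a.val = 0 ∧ b.val = n - 1)))

/-!
With `θ_k = (2k+1)π/n` and `β_k = e^{-iθ_k}` we have `β_k^n = -1`. On a vector `x ↦ β^x`
with `β^n = -1` the reversed arc `0 → n-1` acts like a wrap-around arc `n-1 → 0` twisted by
the sign `β^n`, i.e. `H(C̃_n) = i(S - S⁻¹)` for the negacyclic shift `S`, so `x ↦ β_k^x` is
an eigenvector with eigenvalue `i(β_k - β_k⁻¹) = 2 sin θ_k`. The `β_k = ω^{2k+1}`, for a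
primitive `2n`-th root of unity `ω`, are pairwise distinct, so the Vandermonde matrix of these
eigenvectors is invertible and `H(C̃_n)` is similar to `diag(2 sin θ_k)`.
-/

open Polynomial in
theorem Matrix.IsHermitian.map_eigenvalues_eq_of_mul_eq_mul_diagonal {𝕜 n : Type*} [RCLike 𝕜]
    [Fintype n] [DecidableEq n] {A U : Matrix n n 𝕜} (hA : A.IsHermitian) (hU : IsUnit U.det)
    (d : n → ℝ) (h : A * U = U * diagonal fun i => (d i : 𝕜)) :
    Multiset.map hA.eigenvalues Finset.univ.val = Multiset.map d Finset.univ.val := by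
  have hconj : A = U * diagonal (fun i => (d i : 𝕜)) * U⁻¹ := by
    rw [← h, Matrix.mul_assoc, mul_nonsing_inv _ hU, Matrix.mul_one]
  have hchar : A.charpoly = ∏ i, (X - C (d i : 𝕜)) := by
    rw [hconj, charpoly_mul_comm, ← Matrix.mul_assoc, nonsing_inv_mul _ hU, Matrix.one_mul,
      charpoly_diagonal]
  have hroots : A.charpoly.roots = Multiset.map (RCLike.ofReal ∘ d) Finset.univ.val := by
    rw [hchar, roots_prod _ _ (Finset.prod_ne_zero_iff.mpr fun i _ => X_sub_C_ne_zero _)]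
    simp
  rw [hA.roots_charpoly_eq_eigenvalues, ← Multiset.map_map, ← Multiset.map_map] at hroots
  exact Multiset.map_injective RCLike.ofReal_injective hroots

theorem Matrix.mul_eq_mul_diagonal_of_mulVec_eq {R n : Type*} [CommSemiring R] [Fintype n]
    [DecidableEq n] {A U : Matrix n n R} {d : n → R}
    (h : ∀ k, A *ᵥ (fun i => U i k) = d k • fun i => U i k) : A * U = U * diagonal d := by
  ext i k
  rw [mul_diagonal, mul_apply]
  simpa [mulVec, dotProduct, mul_comm (U i k)] using congrFun (h k) i

theorem isPrimitiveRoot_exp_neg_pi_div_mul_I {n : ℕ} (hn : n ≠ 0) :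
    IsPrimitiveRoot (cexp (-(π / n * I))) (2 * n) := by
  rw [show cexp (-(π / n * I)) = (cexp (2 * π * I / (2 * n : ℕ)))⁻¹ by
    rw [← Complex.exp_neg]; push_cast; field_simp]
  exact (Complex.isPrimitiveRoot_exp (2 * n) (by positivity)).inv

theorem exp_neg_pi_div_mul_I_pow_self {n : ℕ} (hn : n ≠ 0) : cexp (-(π / n * I)) ^ n = -1 := by
  rw [← Complex.exp_nat_mul, show (n : ℂ) * -(π / n * I) = -(π * I) by field_simp,
    Complex.exp_neg, Complex.exp_pi_mul_I]
  norm_num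

theorem exp_neg_pi_div_mul_I_pow_odd {n : ℕ} (k : ℕ) :
    cexp (-(π / n * I)) ^ (2 * k + 1) = cexp (-(((2 * k + 1) * π / n : ℝ) * I)) := by
  rw [← Complex.exp_nat_mul]
  congr 1
  push_cast
  ring

theorem I_mul_exp_sub_inv_eq_two_sin (θ : ℝ) :
    I * (cexp (-(θ * I)) - (cexp (-(θ * I)))⁻¹) = ((2 * Real.sin θ : ℝ) : ℂ) := by
  rw [← Complex.exp_neg, neg_neg]
  push_cast
  rw [Complex.sin]
  ring_nf

theorem hermAdj_apply_of_asymm {V : Type*} {E : V → V → Prop} [DecidableRel E]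
    (hE : ∀ u v, E u v → ¬E v u) (u v : V) :
    hermAdj E u v = (if E u v then I else 0) - (if E v u then I else 0) := by
  by_cases huv : E u v
  · simp [hermAdj, huv, hE u v huv]
  · by_cases hvu : E v u <;> simp [hermAdj, huv, hvu]

theorem cTilde_asymm {n : ℕ} (hn : 2 ≤ n) (a b : Fin n) : cTilde n a b → ¬cTilde n b a := by
  unfold cTilde
  omega

theorem Fin.sum_ite_val_eq {M : Type*} [AddCommMonoid M] {n : ℕ} (m : ℕ) (f : ℕ → M) :
    ∑ b : Fin n, (if m = (b : ℕ) then f b else 0) = if m < n then f m else 0 := by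
  rw [Fin.sum_univ_eq_sum_range (fun b => if m = b then f b else 0)]
  simp

-- For `n = 2` both arcs out of `0` end at `1`, which the right-hand side would count twice.
theorem sum_ite_cTilde_out {M : Type*} [AddCommMonoid M] {n : ℕ} (hn : 3 ≤ n) (f : ℕ → M)
    (a : Fin n) :
    ∑ b : Fin n, (if cTilde n a b then f b else 0) =
      (if (a : ℕ) + 1 < n then f (a + 1) else 0) + (if (a : ℕ) = 0 then f (n - 1) else 0) := by
  have hsplit (b : Fin n) : (if cTilde n a b then f b else 0) =
      (if (a : ℕ) + 1 = b then f b else 0) +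
        if (a : ℕ) = 0 then (if n - 1 = (b : ℕ) then f b else 0) else 0 := by
    by_cases hab : cTilde n a b <;> simp only [hab, if_true, if_false] <;> unfold cTilde at hab <;>
      split_ifs <;> first | omega | simp
  simp only [hsplit, Finset.sum_add_distrib, Fin.sum_ite_val_eq, Finset.sum_ite_irrel,
    Finset.sum_const_zero]
  simp [show n - 1 < n by omega]

theorem sum_ite_cTilde_in {M : Type*} [AddCommMonoid M] {n : ℕ} (hn : 3 ≤ n) (f : ℕ → M)
    (a : Fin n) :
    ∑ b : Fin n, (if cTilde n b a then f b else 0) =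
      (if 0 < (a : ℕ) then f (a - 1) else 0) + (if (a : ℕ) = n - 1 then f 0 else 0) := by
  have hsplit (b : Fin n) : (if cTilde n b a then f b else 0) =
      (if 0 < (a : ℕ) then (if (a : ℕ) - 1 = b then f b else 0) else 0) +
        if (a : ℕ) = n - 1 then (if 0 = (b : ℕ) then f b else 0) else 0 := by
    by_cases hba : cTilde n b a <;> simp only [hba, if_true, if_false] <;> unfold cTilde at hba <;>
      split_ifs <;> first | omega | simp
  simp only [hsplit, Finset.sum_add_distrib, Fin.sum_ite_val_eq, Finset.sum_ite_irrel,
    Finset.sum_const_zero]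
  simp [show (a : ℕ) - 1 < n by omega, show 0 < n by omega]

theorem hermAdj_cTilde_mulVec_pow {n : ℕ} (hn : 3 ≤ n) {β : ℂ} (hβ : β ^ n = -1) :
    hermAdj (cTilde n) *ᵥ (fun b : Fin n => β ^ (b : ℕ)) =
      (I * (β - β⁻¹)) • fun b : Fin n => β ^ (b : ℕ) := by
  have hβ0 : β ≠ 0 := by rintro rfl; simp [zero_pow (by omega : n ≠ 0)] at hβ
  ext a
  simp only [mulVec, dotProduct, hermAdj_apply_of_asymm (cTilde_asymm (n := n) (by omega)),
    sub_mul, ite_mul, zero_mul, Finset.sum_sub_distrib]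
  rw [sum_ite_cTilde_out hn (fun m => I * β ^ m), sum_ite_cTilde_in hn (fun m => I * β ^ m),
    Pi.smul_apply, smul_eq_mul]
  have ha := a.isLt
  by_cases hfirst : (a : ℕ) = 0
  · have hwrap : β ^ (n - 1) * β = -1 := by rw [← pow_succ, Nat.sub_add_cancel (by omega), hβ]
    rw [if_pos (by omega), if_pos hfirst, if_neg (by omega), if_neg (by omega), hfirst]
    field_simp
    linear_combination I * hwrap
  by_cases hlast : (a : ℕ) = n - 1
  · have hwrap : β ^ (n - 2) * β ^ 2 = -1 := by
      rw [← pow_add, Nat.sub_add_cancel (by omega), hβ]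
    rw [if_neg (by omega), if_neg hfirst, if_pos (by omega), if_pos hlast, hlast,
      show n - 1 = n - 2 + 1 by omega, show n - 2 + 1 - 1 = n - 2 by omega]
    field_simp
    linear_combination -I * β * hwrap
  · obtain ⟨m, hm⟩ : ∃ m, (a : ℕ) = m + 1 := ⟨a - 1, by omega⟩
    rw [if_pos (by omega), if_neg hfirst, if_pos (by omega), if_neg hlast, hm, Nat.add_sub_cancel]
    field_simp
    ring

/-- For `n ≥ 3`, the multiset of eigenvalues of `H(C̃_n)` is
`{2 sin((2j+1)π/n) : j = 0, …, n-1}`. -/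
theorem stmt18 (n : ℕ) (hn : 3 ≤ n)
    (hH : (hermAdj (cTilde n)).IsHermitian) :
    Multiset.map hH.eigenvalues Finset.univ.val =
      Multiset.map
        (fun j : Fin n => 2 * Real.sin ((2 * j.val + 1) * Real.pi / n))
        Finset.univ.val := by
  have hω := isPrimitiveRoot_exp_neg_pi_div_mul_I (n := n) (by omega)
  set β : Fin n → ℂ := fun k => cexp (-(π / n * I)) ^ (2 * (k : ℕ) + 1)
  have hβ_pow (k : Fin n) : β k ^ n = -1 := by
    rw [pow_right_comm, exp_neg_pi_div_mul_I_pow_self (by omega),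
      Odd.neg_one_pow ⟨k, rfl⟩]
  have hβ_inj : Function.Injective β := fun k l h =>
    Fin.ext (by have := hω.pow_inj (by omega) (by omega) h; omega)
  refine hH.map_eigenvalues_eq_of_mul_eq_mul_diagonal (U := (vandermonde β)ᵀ) ?_ _ ?_
  · rw [det_transpose]
    exact isUnit_iff_ne_zero.mpr (det_vandermonde_ne_zero_iff.mpr hβ_inj)
  · refine mul_eq_mul_diagonal_of_mulVec_eq fun k => ?_
    have hev : I * (β k - (β k)⁻¹) =
        ((2 * Real.sin ((2 * k.val + 1) * π / n) : ℝ) : ℂ) := by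
      rw [show β k = _ from exp_neg_pi_div_mul_I_pow_odd (n := n) k,
        I_mul_exp_sub_inv_eq_two_sin]
    rw [← RCLike.ofReal_eq_complex_ofReal] at hev
    simpa [← hev] using hermAdj_cTilde_mulVec_pow hn (hβ_pow k)
end

section
/- For n ≥ 1, let T_n be the transitive tournament on vertices {1, 2, …, n}, with an arc from u to v exactly when u < v. Then the characteristic polynomial of its Hermitian adjacency matrix H(T_n) satisfies φ(T_n, t) = Σ_{j=0}^{⌊n/2⌋} (−1)^j · C(n, 2j) · t^{n−2j} = ½·(t+i)^n + ½·(t−i)^n, as polynomials over ℂ. -/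
/-! Writing `J` for the all-ones matrix, `y ↦ det (A + y J)` is affine: after subtracting one row
from all the others, `y` only occurs in that row. For the transitive tournament, `t I - H + i J`
is lower and `t I - H - i J` upper triangular with diagonals `t + i` and `t - i`, so averaging
gives `φ = ½ (t + i)ⁿ + ½ (t - i)ⁿ`; in the binomial expansion of this the odd powers of `i`
cancel. -/

open Matrix Complex Polynomial

namespace Matrix

variable {R ι : Type*} [CommRing R] [Fintype ι] [DecidableEq ι]

theorem det_add_const (A : Matrix ι ι R) (k : ι) (y : R) :
    det (A + of fun _ _ => y) = det A + y * det (updateRow (of fun i j => A i j - A k j) k 1) := by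
  have row_reduce : ∀ z : R, det (A + of fun _ _ => z) =
      det (updateRow (of fun i j => A i j - A k j) k (A k + z • 1)) := fun z =>
    det_eq_of_forall_row_eq_smul_add_const (fun i => if i = k then 0 else 1) k (if_pos rfl)
      fun i j => by
        by_cases hi : i = k
        · subst hi; simp
        · simp only [add_apply, of_apply, updateRow_ne hi, updateRow_self, if_neg hi,
            Pi.add_apply, Pi.smul_apply, Pi.one_apply, smul_eq_mul, mul_one, one_mul]
          ring
  have add_zero_const : (A + of fun _ _ => (0 : R)) = A := by ext; simp
  rw [row_reduce, det_updateRow_add, det_updateRow_smul]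
  congr 1
  simpa [add_zero_const] using (row_reduce 0).symm

theorem det_add_const_add_det_sub_const (A : Matrix ι ι R) (y : R) :
    det (A + of fun _ _ => y) + det (A - of fun _ _ => y) = 2 * det A := by
  cases isEmpty_or_nonempty ι with
  | inl _ => simp only [det_isEmpty]; norm_num
  | inr h =>
    obtain ⟨k⟩ := h
    have sub_const : A - of (fun _ _ => y) = A + of fun _ _ => -y := by
      ext; simp [sub_eq_add_neg]
    rw [sub_const, det_add_const _ k, det_add_const _ k]
    ring

end Matrix

section TransitiveTournament

variable {ι : Type*} [LinearOrder ι]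

theorem hermAdj_lt_apply (u v : ι) :
    hermAdj (fun u v : ι => u < v) u v = if u < v then I else if v < u then -I else 0 := by
  simp only [hermAdj]
  rw [if_neg fun h => lt_asymm h.1 h.2]

theorem two_mul_charpoly_hermAdj_lt [Fintype ι] :
    2 * (hermAdj (fun u v : ι => u < v)).charpoly =
      (X + C I) ^ Fintype.card ι + (X - C I) ^ Fintype.card ι := by
  have lower :
      (charmatrix (hermAdj (fun u v : ι => u < v)) + of fun _ _ => C I).IsLowerTriangular := by
    intro u v (huv : u < v)
    simp [hermAdj_lt_apply, huv, huv.ne]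
  have upper :
      (charmatrix (hermAdj (fun u v : ι => u < v)) - of fun _ _ => C I).IsUpperTriangular := by
    intro u v (hvu : v < u)
    simp [hermAdj_lt_apply, hvu, hvu.ne', hvu.not_gt]
  rw [charpoly, ← det_add_const_add_det_sub_const _ (C I), det_of_isLowerTriangular _ lower,
    det_of_isUpperTriangular upper]
  simp [hermAdj_lt_apply]

end TransitiveTournament

namespace Finset

theorem sum_range_succ_eq_sum_range_even {M : Type*} [AddCommMonoid M] (f : ℕ → M)
    (hf : ∀ k, Odd k → f k = 0) (n : ℕ) :
    ∑ k ∈ range (n + 1), f k = ∑ j ∈ range (n / 2 + 1), f (2 * j) := by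
  rw [← sum_image fun a _ b _ (h : 2 * a = 2 * b) => by omega]
  have image_subset : (range (n / 2 + 1)).image (2 * ·) ⊆ range (n + 1) := by
    intro k
    simp only [mem_image, mem_range, forall_exists_index, and_imp]
    omega
  refine (sum_subset image_subset fun k hk hk' => hf k ?_).symm
  simp only [mem_range, mem_image, not_exists, not_and] at hk hk'
  exact Nat.odd_iff.mpr (by have := hk' (k / 2); omega)

end Finset

theorem add_pow_add_sub_pow {R : Type*} [CommRing R] (x y : R) (n : ℕ) :
    (x + y) ^ n + (x - y) ^ n =
      2 * ∑ j ∈ Finset.range (n / 2 + 1),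
        (n.choose (2 * j) : R) * y ^ (2 * j) * x ^ (n - 2 * j) := by
  rw [add_comm x, sub_eq_neg_add, add_pow, add_pow, ← Finset.sum_add_distrib,
    Finset.sum_range_succ_eq_sum_range_even, Finset.mul_sum]
  · refine Finset.sum_congr rfl fun j _ => ?_
    rw [(even_two_mul j).neg_pow]
    ring
  · intro k hk
    rw [hk.neg_pow]
    ring

theorem stmt19_general (n : ℕ) :
    (hermAdj (fun u v : Fin n => u < v)).charpoly =
        ∑ j ∈ Finset.range (n / 2 + 1),
          Polynomial.C ((-1 : ℂ) ^ j * (n.choose (2 * j) : ℂ)) *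
            Polynomial.X ^ (n - 2 * j) ∧
    (hermAdj (fun u v : Fin n => u < v)).charpoly =
        Polynomial.C (1 / 2 : ℂ) * (Polynomial.X + Polynomial.C Complex.I) ^ n
          + Polynomial.C (1 / 2 : ℂ) * (Polynomial.X - Polynomial.C Complex.I) ^ n := by
  set χ := (hermAdj fun u v : Fin n => u < v).charpoly
  have two_mul_charpoly : 2 * χ = (X + C I) ^ n + (X - C I) ^ n := by
    simpa using two_mul_charpoly_hermAdj_lt (ι := Fin n)
  have half_two : C (1 / 2 : ℂ) * 2 = 1 := by
    rw [← map_ofNat C 2, ← C_mul]; norm_num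
  refine ⟨?_, by linear_combination C (1 / 2 : ℂ) * two_mul_charpoly - χ * half_two⟩
  rw [add_pow_add_sub_pow] at two_mul_charpoly
  rw [mul_left_cancel₀ two_ne_zero two_mul_charpoly]
  refine Finset.sum_congr rfl fun j _ => ?_
  rw [← map_pow, pow_mul, I_sq, C_mul, ← map_natCast C]
  ring

/-- The characteristic polynomial of the Hermitian adjacency matrix of the transitive
tournament `T_n` (arc `u → v` iff `u < v`) equals
`∑_{j=0}^{⌊n/2⌋} (-1)^j C(n,2j) t^(n-2j) = ½(t+i)^n + ½(t-i)^n`. -/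
theorem stmt19 (n : ℕ) (hn : 1 ≤ n) :
    (hermAdj (fun u v : Fin n => u < v)).charpoly =
        ∑ j ∈ Finset.range (n / 2 + 1),
          Polynomial.C ((-1 : ℂ) ^ j * (n.choose (2 * j) : ℂ)) *
            Polynomial.X ^ (n - 2 * j) ∧
    (hermAdj (fun u v : Fin n => u < v)).charpoly =
        Polynomial.C (1 / 2 : ℂ) * (Polynomial.X + Polynomial.C Complex.I) ^ n
          + Polynomial.C (1 / 2 : ℂ) * (Polynomial.X - Polynomial.C Complex.I) ^ n :=
  stmt19_general n
end
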